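/- arXiv:2407.19925 — 10 statements merged into one kernel-verified Lean document; each statement's English description precedes it below -/
import Mathlib

section
/- Let φ : Ω → W be a function into a vector space W over a field, and let K be a subset of functions from Ω to the field containing φ such that φ is a multiplier of a subset S ⊆ F(Ω, X) for a vector space X (meaning φ·f + (1-φ)·g ∈ S for all f, g ∈ S). Then for every positive integer n, the functions φⁿ and 1 - φⁿ are also multipliers of S. -/
/-- `φ` is a multiplier of `S ⊆ F(Ω, X)`: `φ·f + (1-φ)·g ∈ S` for all `f, g ∈ S`. -/
def IsMultiplier {Ω 𝕜 X : Type*} [Field 𝕜] [AddCommGroup X] [Module 𝕜 X]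
    (φ : Ω → 𝕜) (S : Set (Ω → X)) : Prop :=
  ∀ f ∈ S, ∀ g ∈ S, (fun x => φ x • f x + (1 - φ x) • g x) ∈ S

lemma isMultiplier_mul {Ω 𝕜 X : Type*} [Field 𝕜] [AddCommGroup X] [Module 𝕜 X]
    {φ ψ : Ω → 𝕜} {S : Set (Ω → X)} (hφ : IsMultiplier φ S) (hψ : IsMultiplier ψ S) :
    IsMultiplier (fun x => φ x * ψ x) S := by
  intro f hf g hg
  have h := hφ _ (hψ f hf g hg) g hg
  convert h using 2 with x
  simp only
  module

lemma isMultiplier_one_sub {Ω 𝕜 X : Type*} [Field 𝕜] [AddCommGroup X] [Module 𝕜 X]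
    {φ : Ω → 𝕜} {S : Set (Ω → X)} (hφ : IsMultiplier φ S) :
    IsMultiplier (fun x => 1 - φ x) S := by
  intro f hf g hg
  have h := hφ g hg f hf
  convert h using 2 with x
  simp only [sub_sub_cancel]
  abel

theorem stmt_4 {Ω 𝕜 X : Type*} [Field 𝕜] [AddCommGroup X] [Module 𝕜 X]
    (φ : Ω → 𝕜) (S : Set (Ω → X)) (hφ : IsMultiplier φ S)
    (n : ℕ) (hn : 0 < n) :
    IsMultiplier (fun x => φ x ^ n) S ∧
      IsMultiplier (fun x => 1 - φ x ^ n) S := by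
  have hpow : IsMultiplier (fun x => φ x ^ n) S := by
    induction n with
    | zero => exact absurd hn (lt_irrefl 0)
    | succ m ih =>
      rcases Nat.eq_zero_or_pos m with hm | hm
      · subst hm; simpa using hφ
      · have := isMultiplier_mul (ih hm) hφ
        simpa [pow_succ] using this
  exact ⟨hpow, isMultiplier_one_sub hpow⟩
end

section
/- Let Ω be a topological space, X a seminormed space with seminorm p, W ⊆ F(Ω, X), f : Ω → X, and v : Ω → ℝ≥0 such that the closure of (v·f)(Ω) is compact. Then inf_{g ∈ W} sup_{x ∈ Ω} p(v(x)f(x) − v(x)g(x)) = 0 if and only if for every ε > 0 and every finite list x₁, …, xₙ ∈ X there exists g ∈ W such that for all x ∈ Ω and all i, p(v(x)f(x) − xᵢ) < ε implies p(v(x)g(x) − xᵢ) < 2ε. -/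
/-!
The infimum vanishes iff `v • f` is a uniform limit of the functions `v • g`, `g ∈ W`.
If `v • g` is uniformly `ε`-close to `v • f`, the two-`ε` condition is the triangle inequality.
Conversely, apply the condition to a finite `ε`-net of the totally bounded range of `v • f`:
every `v x • f x` is `ε`-close to a net point, which is then `2ε`-close to `v x • g x`,
so `v • g` is uniformly `3ε`-close to `v • f`.
-/

open scoped ENNReal

open Metric Set

section UniformApproximation

variable {Ω X α : Type*} [PseudoMetricSpace X] {W : Set α} {φ : Ω → X} {G : α → Ω → X}

theorem iInf_iSup_edist_eq_zero_iff :
    (⨅ g ∈ W, ⨆ x, edist (φ x) (G g x)) = 0 ↔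
      ∀ δ > (0 : ℝ), ∃ g ∈ W, ∀ x, dist (φ x) (G g x) < δ := by
  constructor
  · intro h δ hδ
    have : (⨅ g ∈ W, ⨆ x, edist (φ x) (G g x)) < ENNReal.ofReal (δ / 2) := by
      rw [h]; simpa using half_pos hδ
    simp only [iInf_lt_iff] at this
    obtain ⟨g, hgW, hg⟩ := this
    refine ⟨g, hgW, fun x => ?_⟩
    have hx : edist (φ x) (G g x) < ENNReal.ofReal (δ / 2) := (le_iSup _ x).trans_lt hg
    rw [edist_dist, ENNReal.ofReal_lt_ofReal_iff (half_pos hδ)] at hx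
    linarith
  · intro h
    refine nonpos_iff_eq_zero.mp <| ENNReal.le_of_forall_pos_le_add fun δ hδ _ => ?_
    obtain ⟨g, hgW, hg⟩ := h δ hδ
    refine (iInf₂_le g hgW).trans <| iSup_le fun x => ?_
    rw [zero_add, edist_dist, ← ENNReal.ofReal_coe_nnreal]
    exact ENNReal.ofReal_le_ofReal (hg x).le

theorem dist_lt_two_mul_of_forall_dist_lt {ψ : Ω → X} {ε : ℝ}
    (h : ∀ x, dist (φ x) (ψ x) < ε) (x : Ω) (y : X) (hy : dist (φ x) y < ε) :
    dist (ψ x) y < 2 * ε := by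
  linarith [dist_triangle_left (ψ x) y (φ x), h x]

theorem dist_lt_three_mul_of_cover {ψ : Ω → X} {ε : ℝ} {t : Set X}
    (hcover : range φ ⊆ ⋃ y ∈ t, ball y ε)
    (h : ∀ x, ∀ y ∈ t, dist (φ x) y < ε → dist (ψ x) y < 2 * ε) (x : Ω) :
    dist (φ x) (ψ x) < 3 * ε := by
  obtain ⟨y, hyt, hy⟩ := mem_iUnion₂.mp (hcover (mem_range_self x))
  linarith [dist_triangle_right (φ x) (ψ x) y, h x y hyt hy, mem_ball.mp hy]

theorem iInf_iSup_edist_eq_zero_iff_of_totallyBounded (hφ : TotallyBounded (range φ)) :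
    (⨅ g ∈ W, ⨆ x, edist (φ x) (G g x)) = 0 ↔
      ∀ ε > (0 : ℝ), ∀ ys : List X, ∃ g ∈ W, ∀ x, ∀ y ∈ ys,
        dist (φ x) y < ε → dist (G g x) y < 2 * ε := by
  rw [iInf_iSup_edist_eq_zero_iff]
  constructor
  · intro h ε hε ys
    obtain ⟨g, hgW, hg⟩ := h ε hε
    exact ⟨g, hgW, fun x y _ => dist_lt_two_mul_of_forall_dist_lt hg x y⟩
  · intro h δ hδ
    obtain ⟨t, htfin, hcover⟩ := totallyBounded_iff.mp hφ (δ / 3) (by positivity)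
    obtain ⟨g, hgW, hg⟩ := h (δ / 3) (by positivity) htfin.toFinset.toList
    refine ⟨g, hgW, fun x => ?_⟩
    have := dist_lt_three_mul_of_cover hcover (fun x y hy => hg x y (by simpa using hy)) x
    linarith

end UniformApproximation

theorem stmt_5_general {Ω X : Type*} [SeminormedAddCommGroup X]
    [NormedSpace ℝ X] (W : Set (Ω → X)) (f : Ω → X) (v : Ω → ℝ)
    (hcpt : IsCompact (closure (Set.range fun x => v x • f x))) :
    (⨅ g ∈ W, ⨆ x : Ω, (‖v x • f x - v x • g x‖₊ : ℝ≥0∞)) = 0 ↔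
      ∀ ε > (0 : ℝ), ∀ xs : List X, ∃ g ∈ W, ∀ x : Ω, ∀ xi ∈ xs,
        ‖v x • f x - xi‖ < ε → ‖v x • g x - xi‖ < 2 * ε := by
  simpa only [edist_eq_enorm_sub, enorm_eq_nnnorm, dist_eq_norm] using
    iInf_iSup_edist_eq_zero_iff_of_totallyBounded (W := W) (G := fun g x => v x • g x)
      (hcpt.totallyBounded.subset subset_closure)

theorem stmt_5 {Ω X : Type*} [TopologicalSpace Ω] [SeminormedAddCommGroup X]
    [NormedSpace ℝ X] (W : Set (Ω → X)) (f : Ω → X) (v : Ω → ℝ)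
    (hv : ∀ x, 0 ≤ v x)
    (hcpt : IsCompact (closure (Set.range fun x => v x • f x))) :
    (⨅ g ∈ W, ⨆ x : Ω, (‖v x • f x - v x • g x‖₊ : ℝ≥0∞)) = 0 ↔
      ∀ ε > (0 : ℝ), ∀ xs : List X, ∃ g ∈ W, ∀ x : Ω, ∀ xi ∈ xs,
        ‖v x • f x - xi‖ < ε → ‖v x • g x - xi‖ < 2 * ε :=
  stmt_5_general W f v hcpt
end

section
/- Let Ω be a completely regular Hausdorff space, βΩ its Stone–Čech compactification, and F a z-filter on Ω. For any continuous bounded φ : Ω → ℂ with Stone extension φ^β : βΩ → ℂ, one has φ^β(⋂_{F ∈ 𝓕} cl_β F) = ⋂_{F ∈ 𝓕} cl(φ(F)), where cl_β denotes closure in βΩ and cl denotes closure in ℂ. -/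
/-!
The closures `cl_β F`, `F ∈ 𝓕`, form a downward directed family of compact sets, since `𝓕` is
closed under finite intersections. As `φ^β` is a closed map on the compact space `βΩ`,
`cl (φ F) = φ^β (cl_β F)`, and a point `y` lying in all of these makes the
compact sets `cl_β F ∩ (φ^β)⁻¹ {y}` a directed family of nonempty closed sets, so they have a
common point, which lies in `⋂ cl_β F` and is mapped to `y`.
-/

/-- A zero-set of a topological space. -/
def IsZeroSet {Ω : Type*} [TopologicalSpace Ω] (Z : Set Ω) : Prop :=
  ∃ h : Ω → ℝ, Continuous h ∧ Z = h ⁻¹' {0}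

/-- A z-filter on `Ω`. -/
def IsZFilter {Ω : Type*} [TopologicalSpace Ω] (𝓕 : Set (Set Ω)) : Prop :=
  𝓕.Nonempty ∧ (∀ Z ∈ 𝓕, IsZeroSet Z) ∧ (∅ : Set Ω) ∉ 𝓕 ∧
    (∀ Z₁ ∈ 𝓕, ∀ Z₂ ∈ 𝓕, Z₁ ∩ Z₂ ∈ 𝓕) ∧
    (∀ Z ∈ 𝓕, ∀ Z' : Set Ω, IsZeroSet Z' → Z ⊆ Z' → Z' ∈ 𝓕)

open Set

theorem Continuous.image_iInter_of_directed {X Y ι : Type*} [TopologicalSpace X]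
    [CompactSpace X] [TopologicalSpace Y] [T1Space Y] [Nonempty ι] {f : X → Y}
    (hf : Continuous f) {K : ι → Set X} (hd : Directed (· ⊇ ·) K)
    (hK : ∀ i, IsClosed (K i)) :
    f '' ⋂ i, K i = ⋂ i, f '' K i := by
  refine (image_iInter_subset K f).antisymm fun y hy => ?_
  have hfibre : ∀ i, IsClosed (K i ∩ f ⁻¹' {y}) :=
    fun i => (hK i).inter (isClosed_singleton.preimage hf)
  obtain ⟨x, hx⟩ := IsCompact.nonempty_iInter_of_directed_nonempty_isCompact_isClosed
    (fun i => K i ∩ f ⁻¹' {y})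
    (fun i j => (hd i j).imp fun _ hk =>
      ⟨inter_subset_inter_left _ hk.1, inter_subset_inter_left _ hk.2⟩)
    (mem_iInter.1 hy)
    (fun i => (hfibre i).isCompact) hfibre
  simp only [mem_iInter, mem_inter_iff, mem_preimage, mem_singleton_iff] at hx
  exact ⟨x, mem_iInter.2 fun i => (hx i).1, (hx (Classical.arbitrary ι)).2⟩

theorem IsZFilter.directed_closure_image {Ω X : Type*} [TopologicalSpace Ω]
    [TopologicalSpace X] {𝓕 : Set (Set Ω)} (h𝓕 : IsZFilter 𝓕) (g : Ω → X) :
    Directed (· ⊇ ·) fun F : 𝓕 => closure (g '' F) := by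
  rintro ⟨F₁, hF₁⟩ ⟨F₂, hF₂⟩
  exact ⟨⟨F₁ ∩ F₂, h𝓕.2.2.2.1 F₁ hF₁ F₂ hF₂⟩,
    closure_mono (image_mono inter_subset_left), closure_mono (image_mono inter_subset_right)⟩

theorem stmt_6_general {Ω : Type*} [TopologicalSpace Ω] (𝓕 : Set (Set Ω)) (h𝓕 : IsZFilter 𝓕)
    (φ : Ω → ℂ)
    (φβ : StoneCech Ω → ℂ) (hβc : Continuous φβ)
    (hβe : ∀ x : Ω, φβ (stoneCechUnit x) = φ x) :
    φβ '' (⋂ F ∈ 𝓕, closure (stoneCechUnit '' F)) =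
      ⋂ F ∈ 𝓕, closure (φ '' F) := by
  have hclosure : ∀ F : Set Ω, φβ '' closure (stoneCechUnit '' F) = closure (φ '' F) := by
    intro F
    rw [← hβc.isClosedMap.closure_image_eq_of_continuous hβc, image_image]
    simp only [hβe]
  have : Nonempty 𝓕 := h𝓕.1.to_subtype
  simp only [biInter_eq_iInter, ← hclosure]
  exact hβc.image_iInter_of_directed (h𝓕.directed_closure_image _)
    fun _ => isClosed_closure

theorem stmt_6 {Ω : Type*} [TopologicalSpace Ω] [CompletelyRegularSpace Ω]
    [T2Space Ω] (𝓕 : Set (Set Ω)) (h𝓕 : IsZFilter 𝓕)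
    (φ : Ω → ℂ) (hφ : Continuous φ) (hb : Bornology.IsBounded (Set.range φ))
    (φβ : StoneCech Ω → ℂ) (hβc : Continuous φβ)
    (hβe : ∀ x : Ω, φβ (stoneCechUnit x) = φ x) :
    φβ '' (⋂ F ∈ 𝓕, closure (stoneCechUnit '' F)) =
      ⋂ F ∈ 𝓕, closure (φ '' F) :=
  stmt_6_general 𝓕 h𝓕 φ φβ hβc hβe
end

section
/- Let Ω be a topological space and A a self-adjoint subalgebra of bounded continuous complex-valued functions on Ω. Let 𝓕 be a z-filter on Ω such that for every φ ∈ A with ⋂_{F ∈ 𝓕} cl(φ(F)) ⊆ [0,1] this intersection is a single point. Then for every φ ∈ A, the set ⋂_{F ∈ 𝓕} cl(φ(F)) is a single point of ℂ. -/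
/-- Pushforward of membership in the intersection of closures. -/
lemma aux_push {Ω : Type*} [TopologicalSpace Ω] (𝓕 : Set (Set Ω)) (φ ψ : Ω → ℂ)
    (f : ℂ → ℂ) (hf : Continuous f) (hcomp : ∀ x, f (φ x) = ψ x) {z : ℂ}
    (hz : z ∈ ⋂ F ∈ 𝓕, closure (φ '' F)) :
    f z ∈ ⋂ F ∈ 𝓕, closure (ψ '' F) := by
  simp only [Set.mem_iInter] at hz ⊢
  intro F hF
  refine map_mem_closure hf (hz F hF) ?_
  rintro y ⟨x, hx, rfl⟩
  exact ⟨x, hx, (hcomp x).symm⟩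

/-- Nonemptiness of the intersection of closures for a bounded function. -/
lemma aux_ne {Ω : Type*} [TopologicalSpace Ω] (𝓕 : Set (Set Ω)) (h𝓕 : IsZFilter 𝓕)
    (φ : Ω → ℂ) (hb : Bornology.IsBounded (Set.range φ)) :
    (⋂ F ∈ 𝓕, closure (φ '' F)).Nonempty := by
  obtain ⟨hne, -, hempty, hinter, -⟩ := h𝓕
  have : Nonempty 𝓕 := hne.to_subtype
  rw [Set.biInter_eq_iInter]
  apply IsCompact.nonempty_iInter_of_directed_nonempty_isCompact_isClosed
  · rintro ⟨F₁, hF₁⟩ ⟨F₂, hF₂⟩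
    refine ⟨⟨F₁ ∩ F₂, hinter F₁ hF₁ F₂ hF₂⟩, ?_, ?_⟩
    · exact closure_mono (Set.image_mono Set.inter_subset_left)
    · exact closure_mono (Set.image_mono Set.inter_subset_right)
  · rintro ⟨F, hF⟩
    rcases Set.eq_empty_or_nonempty F with rfl | ⟨x, hx⟩
    · exact absurd hF hempty
    · exact ⟨φ x, subset_closure ⟨x, hx, rfl⟩⟩
  · rintro ⟨F, hF⟩
    refine Metric.isCompact_of_isClosed_isBounded isClosed_closure ?_
    exact (hb.subset (Set.image_subset_range φ F)).closure
  · exact fun _ => isClosed_closure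

lemma aux_sq_im {r : ℝ} (h : |r| ≤ 1/2) :
    (r^2 ∈ Set.Icc (0:ℝ) 1) ∧ ((r^3 + r^2)/2 ∈ Set.Icc (0:ℝ) 1) := by
  rw [abs_le] at h
  constructor <;> constructor <;> nlinarith [h.1, h.2, sq_nonneg r]

theorem stmt_8 {Ω : Type*} [TopologicalSpace Ω] (A : Set (Ω → ℂ))
    (hcont : ∀ φ ∈ A, Continuous φ)
    (hbdd : ∀ φ ∈ A, Bornology.IsBounded (Set.range φ))
    (hconj : ∀ φ ∈ A, (fun x => starRingEnd ℂ (φ x)) ∈ A)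
    (hadd : ∀ φ ∈ A, ∀ ψ ∈ A, (fun x => φ x + ψ x) ∈ A)
    (hmul : ∀ φ ∈ A, ∀ ψ ∈ A, (fun x => φ x * ψ x) ∈ A)
    (hsmul : ∀ (c : ℂ), ∀ φ ∈ A, (fun x => c * φ x) ∈ A)
    (𝓕 : Set (Set Ω)) (h𝓕 : IsZFilter 𝓕)
    (hanti : ∀ φ ∈ A,
      (⋂ F ∈ 𝓕, closure (φ '' F)) ⊆ Complex.ofReal '' Set.Icc (0 : ℝ) 1 →
        ∃ z : ℂ, (⋂ F ∈ 𝓕, closure (φ '' F)) = {z}) :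
    ∀ φ ∈ A, ∃ z : ℂ, (⋂ F ∈ 𝓕, closure (φ '' F)) = {z} := by
  obtain ⟨F₀, hF₀⟩ := h𝓕.1
  have hF₀ne : F₀.Nonempty := by
    rcases Set.eq_empty_or_nonempty F₀ with rfl | h
    · exact absurd hF₀ h𝓕.2.2.1
    · exact h
  have : Nonempty Ω := ⟨hF₀ne.choose⟩
  -- S is the target set, which is closed
  set S : Set ℂ := Complex.ofReal '' Set.Icc (0 : ℝ) 1 with hS
  have hSclosed : IsClosed S := (isCompact_Icc.image Complex.continuous_ofReal).isClosed
  -- if a function has all values in S, its intersection set is contained in S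
  have hsub : ∀ f : Ω → ℂ, (∀ x, f x ∈ S) → (⋂ F ∈ 𝓕, closure (f '' F)) ⊆ S := by
    intro f hf
    refine (Set.biInter_subset_of_mem hF₀).trans ?_
    refine closure_minimal ?_ hSclosed
    rintro y ⟨x, -, rfl⟩; exact hf x
  -- Step 1: the result for real-valued members of A
  have hreal : ∀ ψ ∈ A, (∀ x, (ψ x).im = 0) →
      ∃ z : ℂ, (⋂ F ∈ 𝓕, closure (ψ '' F)) = {z} := by
    intro ψ hψ him
    obtain ⟨M, hM⟩ := Metric.isBounded_iff_subset_closedBall 0 |>.mp (hbdd ψ hψ)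
    have hMnorm : ∀ x, ‖ψ x‖ ≤ M := by
      intro x
      have := hM (Set.mem_range_self x)
      simpa [Metric.mem_closedBall] using this
    have hM0 : (0:ℝ) ≤ M := le_trans (norm_nonneg _) (hMnorm (Classical.arbitrary Ω))
    set c : ℝ := (2*(M+1))⁻¹ with hc
    have hcpos : 0 < c := by positivity
    have hcc : c * (2*(M+1)) = 1 := inv_mul_cancel₀ (by positivity)
    set η : Ω → ℂ := fun x => (c:ℂ) * ψ x with hη
    have hηA : η ∈ A := hsmul c ψ hψ
    have hηre : ∀ x, η x = ((c * (ψ x).re : ℝ) : ℂ) := by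
      intro x
      apply Complex.ext
      · simp [hη, Complex.mul_re, him x]
      · simp [hη, Complex.mul_im, him x]
    have hηbd : ∀ x, |c * (ψ x).re| ≤ 1/2 := by
      intro x
      have h1 : |(ψ x).re| ≤ M := (Complex.abs_re_le_norm _).trans (hMnorm x)
      rw [abs_mul, abs_of_pos hcpos]
      nlinarith [mul_le_mul_of_nonneg_left h1 hcpos.le]
    have hη2A : (fun x => η x * η x) ∈ A := hmul η hηA η hηA
    have hη3A : (fun x => η x * η x * η x) ∈ A := hmul _ hη2A η hηA
    have hgA : (fun x => (1/2 : ℂ) * (η x * η x * η x + η x * η x)) ∈ A :=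
      hsmul _ _ (hadd _ hη3A _ hη2A)
    have hη2S : ∀ x, η x * η x ∈ S := by
      intro x
      rw [hηre x]
      refine ⟨(c*(ψ x).re)^2, (aux_sq_im (hηbd x)).1, ?_⟩
      push_cast; ring
    have hgS : ∀ x, (1/2:ℂ) * (η x * η x * η x + η x * η x) ∈ S := by
      intro x
      rw [hηre x]
      refine ⟨((c*(ψ x).re)^3 + (c*(ψ x).re)^2)/2, (aux_sq_im (hηbd x)).2, ?_⟩
      push_cast; ring
    obtain ⟨sv, hs⟩ := hanti _ hη2A (hsub _ hη2S)
    obtain ⟨tv, ht⟩ := hanti _ hgA (hsub _ hgS)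
    have huniq : ∀ z ∈ (⋂ F ∈ 𝓕, closure (η '' F)),
        ∀ w ∈ (⋂ F ∈ 𝓕, closure (η '' F)), z = w := by
      intro z hz w hw
      have hz2 := aux_push 𝓕 η _ (fun u => u*u) (by fun_prop) (fun x => rfl) hz
      have hw2 := aux_push 𝓕 η _ (fun u => u*u) (by fun_prop) (fun x => rfl) hw
      have hz3 := aux_push 𝓕 η _ (fun u => (1/2:ℂ) * (u*u*u + u*u)) (by fun_prop)
        (fun x => rfl) hz
      have hw3 := aux_push 𝓕 η _ (fun u => (1/2:ℂ) * (u*u*u + u*u)) (by fun_prop)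
        (fun x => rfl) hw
      rw [hs, Set.mem_singleton_iff] at hz2 hw2
      rw [ht, Set.mem_singleton_iff] at hz3 hw3
      have h2 : z * z = w * w := hz2.trans hw2.symm
      have h3 : (1/2:ℂ) * (z*z*z + z*z) = (1/2:ℂ) * (w*w*w + w*w) := hz3.trans hw3.symm
      have hkey : (z - w) * (z * z) = 0 := by linear_combination 2*h3 + (-1 - w)*h2
      rcases mul_eq_zero.mp hkey with h | h
      · exact sub_eq_zero.mp h
      · have hz0 : z = 0 := by
          rcases mul_eq_zero.mp h with h' | h' <;> exact h'
        have hw0 : w = 0 := by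
          have : w * w = 0 := by rw [← h2, hz0, mul_zero]
          rcases mul_eq_zero.mp this with h' | h' <;> exact h'
        rw [hz0, hw0]
    have hηuniq := huniq
    have hηne := aux_ne 𝓕 h𝓕 η (hbdd η hηA)
    have hψne := aux_ne 𝓕 h𝓕 ψ (hbdd ψ hψ)
    refine ⟨hψne.choose, Set.eq_singleton_iff_unique_mem.mpr ⟨hψne.choose_spec, ?_⟩⟩
    intro w hw
    have hc0 : (c : ℂ) ≠ 0 := by exact_mod_cast hcpos.ne'
    have h1 := aux_push 𝓕 ψ η (fun u => (c:ℂ) * u) (by fun_prop) (fun x => rfl) hw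
    have h2 := aux_push 𝓕 ψ η (fun u => (c:ℂ) * u) (by fun_prop) (fun x => rfl)
      hψne.choose_spec
    have := huniq _ h1 _ h2
    exact mul_left_cancel₀ hc0 this
  -- Step 2: general case
  intro φ hφ
  have hψA : (fun x => (1/2:ℂ) * (φ x + starRingEnd ℂ (φ x))) ∈ A :=
    hsmul _ _ (hadd φ hφ _ (hconj φ hφ))
  have hχA : (fun x => (-Complex.I/2) * (φ x + (-1:ℂ) * starRingEnd ℂ (φ x))) ∈ A :=
    hsmul _ _ (hadd φ hφ _ (hsmul (-1) _ (hconj φ hφ)))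
  have hψim : ∀ x, ((1/2:ℂ) * (φ x + starRingEnd ℂ (φ x))).im = 0 := by
    intro x
    simp [Complex.mul_im, Complex.add_im, Complex.conj_im, Complex.conj_re,
      Complex.add_re]
  have hχim : ∀ x, ((-Complex.I/2) * (φ x + (-1:ℂ) * starRingEnd ℂ (φ x))).im = 0 := by
    intro x
    simp [Complex.mul_im, Complex.mul_re, Complex.add_im, Complex.add_re,
      Complex.conj_im, Complex.conj_re, Complex.div_im, Complex.div_re]
  obtain ⟨a, ha⟩ := hreal _ hψA hψim
  obtain ⟨b, hb⟩ := hreal _ hχA hχim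
  have hφne := aux_ne 𝓕 h𝓕 φ (hbdd φ hφ)
  refine ⟨hφne.choose, Set.eq_singleton_iff_unique_mem.mpr ⟨hφne.choose_spec, ?_⟩⟩
  intro w hw
  set z := hφne.choose with hzdef
  have hz : z ∈ ⋂ F ∈ 𝓕, closure (φ '' F) := hφne.choose_spec
  have e1 := aux_push 𝓕 φ _ (fun u => (1/2:ℂ) * (u + starRingEnd ℂ u)) (continuous_const.mul (continuous_id.add (RCLike.continuous_conj)))
    (fun x => rfl) hw
  have e2 := aux_push 𝓕 φ _ (fun u => (-Complex.I/2) * (u + (-1:ℂ) * starRingEnd ℂ u))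
    (continuous_const.mul (continuous_id.add (continuous_const.mul RCLike.continuous_conj))) (fun x => rfl) hw
  have e3 := aux_push 𝓕 φ _ (fun u => (1/2:ℂ) * (u + starRingEnd ℂ u)) (continuous_const.mul (continuous_id.add (RCLike.continuous_conj)))
    (fun x => rfl) hz
  have e4 := aux_push 𝓕 φ _ (fun u => (-Complex.I/2) * (u + (-1:ℂ) * starRingEnd ℂ u))
    (continuous_const.mul (continuous_id.add (continuous_const.mul RCLike.continuous_conj))) (fun x => rfl) hz
  rw [ha, Set.mem_singleton_iff] at e1 e3
  rw [hb, Set.mem_singleton_iff] at e2 e4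
  linear_combination e1 - e3 + Complex.I*(e2 - e4) +
    ((w - z - starRingEnd ℂ w + starRingEnd ℂ z)/2) * Complex.I_sq
end

section
/- Let Ω be a completely regular Hausdorff space and A ⊆ C(Ω, [0,1]) a family that separates disjoint zero-sets of Ω (for disjoint zero-sets Z₁, Z₂ there is φ ∈ A with cl(φ(Z₁)) ∩ cl(φ(Z₂)) = ∅). If 𝓕 is a z-filter on Ω such that for every φ ∈ A the set ⋂_{F ∈ 𝓕} cl(φ(F)) is a single point, then ⋂_{F ∈ 𝓕} cl_β F consists of exactly one point of βΩ. -/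
open Set

section

variable {Ω X Y : Type*} [TopologicalSpace X] [TopologicalSpace Y]

theorem isZeroSet_setOf_le [TopologicalSpace Ω] {f g : Ω → ℝ} (hf : Continuous f)
    (hg : Continuous g) : IsZeroSet {x | f x ≤ g x} :=
  ⟨fun x => max (f x - g x) 0, (hf.sub hg).max continuous_const, by
    ext x
    simp⟩

namespace IsZFilter

variable [TopologicalSpace Ω] {𝓕 : Set (Set Ω)}

theorem nonempty_of_mem (h𝓕 : IsZFilter 𝓕) {F : Set Ω} (hF : F ∈ 𝓕) : F.Nonempty :=
  nonempty_iff_ne_empty.2 fun hempty => h𝓕.2.2.1 (hempty ▸ hF)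

theorem directedOn (h𝓕 : IsZFilter 𝓕) : DirectedOn (· ⊇ ·) 𝓕 :=
  fun F₁ h₁ F₂ h₂ => ⟨F₁ ∩ F₂, h𝓕.2.2.2.1 F₁ h₁ F₂ h₂, inter_subset_left, inter_subset_right⟩

end IsZFilter

theorem nonempty_biInter_closure_image [CompactSpace X] (f : Ω → X) {𝓕 : Set (Set Ω)}
    (hne : 𝓕.Nonempty) (hdir : DirectedOn (· ⊇ ·) 𝓕) (hmem : ∀ F ∈ 𝓕, F.Nonempty) :
    (⋂ F ∈ 𝓕, closure (f '' F)).Nonempty := by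
  have : Nonempty 𝓕 := hne.to_subtype
  rw [biInter_eq_iInter]
  exact IsCompact.nonempty_iInter_of_directed_nonempty_isCompact_isClosed _
    (hdir.directed_val.mono_comp (g := fun F => closure (f '' F)) _
      fun _ _ h => closure_mono (image_mono h))
    (fun F => ((hmem F F.2).image f).closure) (fun _ => isClosed_closure.isCompact)
    (fun _ => isClosed_closure)

theorem mapsTo_closure_image_of_comp_eq {Φ : X → Y} (hΦ : Continuous Φ) {u : Ω → X}
    {φ : Ω → Y} (h : Φ ∘ u = φ) (S : Set Ω) :
    MapsTo Φ (closure (u '' S)) (closure (φ '' S)) := by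
  refine fun y hy => map_mem_closure hΦ hy ?_
  rintro _ ⟨x, hx, rfl⟩
  exact ⟨x, hx, (congrFun h x).symm⟩

theorem mapsTo_biInter_closure_image_of_comp_eq {Φ : X → Y} (hΦ : Continuous Φ) {u : Ω → X}
    {φ : Ω → Y} (h : Φ ∘ u = φ) (𝓕 : Set (Set Ω)) :
    MapsTo Φ (⋂ F ∈ 𝓕, closure (u '' F)) (⋂ F ∈ 𝓕, closure (φ '' F)) := fun _ hy =>
  mem_iInter₂.2 fun F hF => mapsTo_closure_image_of_comp_eq hΦ h F (mem_iInter₂.1 hy F hF)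

theorem exists_continuous_stoneCech_extension [TopologicalSpace Ω] [T2Space Y] {φ : Ω → Y}
    (hφ : Continuous φ) {K : Set Y} (hK : IsCompact K) (hφK : ∀ x, φ x ∈ K) :
    ∃ Φ : StoneCech Ω → Y, Continuous Φ ∧ Φ ∘ stoneCechUnit = φ := by
  have : CompactSpace K := isCompact_iff_compactSpace.1 hK
  have hψ : Continuous fun x => (⟨φ x, hφK x⟩ : K) := hφ.subtype_mk _
  exact ⟨fun y => (stoneCechExtend hψ y).1,
    continuous_subtype_val.comp (continuous_stoneCechExtend hψ),
    funext fun x => congrArg Subtype.val (stoneCechExtend_stoneCechUnit hψ x)⟩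

theorem StoneCech.exists_isZeroSet_mem_closure_of_ne [TopologicalSpace Ω] {p q : StoneCech Ω}
    (hpq : p ≠ q) :
    ∃ Z₁ Z₂ : Set Ω, IsZeroSet Z₁ ∧ IsZeroSet Z₂ ∧ Z₁ ∩ Z₂ = ∅ ∧
      p ∈ closure (stoneCechUnit '' Z₁) ∧ q ∈ closure (stoneCechUnit '' Z₂) := by
  obtain ⟨g, hgp, hgq, -⟩ := exists_continuous_zero_one_of_isClosed
    (isClosed_singleton (x := p)) (isClosed_singleton (x := q)) (disjoint_singleton.2 hpq)
  have hu : Continuous fun x => g (stoneCechUnit x) := g.continuous.comp continuous_stoneCechUnit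
  have hdense : DenseRange (stoneCechUnit : Ω → StoneCech Ω) := denseRange_stoneCechUnit
  refine ⟨{x | g (stoneCechUnit x) ≤ 1 / 3}, {x | 2 / 3 ≤ g (stoneCechUnit x)},
    isZeroSet_setOf_le hu continuous_const, isZeroSet_setOf_le continuous_const hu, ?_, ?_, ?_⟩
  · refine eq_empty_of_forall_notMem fun x ⟨h₁, h₂⟩ => ?_
    linarith [show g (stoneCechUnit x) ≤ 1 / 3 from h₁, show 2 / 3 ≤ g (stoneCechUnit x) from h₂]
  · refine closure_mono (image_mono fun x (hx : g (stoneCechUnit x) < 1 / 3) => hx.le)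
      (hdense.subset_closure_image_preimage_of_isOpen (isOpen_Iio.preimage g.continuous) ?_)
    norm_num [hgp rfl]
  · refine closure_mono (image_mono fun x (hx : 2 / 3 < g (stoneCechUnit x)) => hx.le)
      (hdense.subset_closure_image_preimage_of_isOpen (isOpen_Ioi.preimage g.continuous) ?_)
    norm_num [hgq rfl]

end

theorem stmt_9_general {Ω : Type*} [TopologicalSpace Ω] (A : Set (Ω → ℝ))
    (hcont : ∀ φ ∈ A, Continuous φ)
    (hrange : ∀ φ ∈ A, ∀ x, φ x ∈ Set.Icc (0 : ℝ) 1)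
    (hsep : ∀ Z₁ Z₂ : Set Ω, IsZeroSet Z₁ → IsZeroSet Z₂ → Z₁ ∩ Z₂ = ∅ →
      ∃ φ ∈ A, closure (φ '' Z₁) ∩ closure (φ '' Z₂) = ∅)
    (𝓕 : Set (Set Ω)) (h𝓕 : IsZFilter 𝓕)
    (hsingle : ∀ φ ∈ A, ∃ r : ℝ, (⋂ F ∈ 𝓕, closure (φ '' F)) = {r}) :
    ∃ p : StoneCech Ω, (⋂ F ∈ 𝓕, closure (stoneCechUnit '' F)) = {p} := by
  obtain ⟨p, hp⟩ := nonempty_biInter_closure_image stoneCechUnit h𝓕.1 h𝓕.directedOn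
    fun _ => h𝓕.nonempty_of_mem
  refine ⟨p, eq_singleton_iff_unique_mem.2 ⟨hp, fun q hq => ?_⟩⟩
  by_contra hqp
  obtain ⟨Z₁, Z₂, hZ₁, hZ₂, hdisj, hq₁, hp₂⟩ := StoneCech.exists_isZeroSet_mem_closure_of_ne hqp
  obtain ⟨φ, hφA, hφsep⟩ := hsep Z₁ Z₂ hZ₁ hZ₂ hdisj
  obtain ⟨r, hr⟩ := hsingle φ hφA
  obtain ⟨Φ, hΦ, hΦφ⟩ :=
    exists_continuous_stoneCech_extension (hcont φ hφA) isCompact_Icc (hrange φ hφA)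
  have hΦ𝓕 := mapsTo_biInter_closure_image_of_comp_eq hΦ hΦφ 𝓕
  have hΦq : Φ q = r := mem_singleton_iff.1 (hr ▸ hΦ𝓕 hq)
  have hΦp : Φ p = r := mem_singleton_iff.1 (hr ▸ hΦ𝓕 hp)
  refine eq_empty_iff_forall_notMem.1 hφsep r ⟨?_, ?_⟩
  · exact hΦq ▸ mapsTo_closure_image_of_comp_eq hΦ hΦφ Z₁ hq₁
  · exact hΦp ▸ mapsTo_closure_image_of_comp_eq hΦ hΦφ Z₂ hp₂

theorem stmt_9 {Ω : Type*} [TopologicalSpace Ω] [CompletelyRegularSpace Ω]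
    [T2Space Ω] (A : Set (Ω → ℝ))
    (hcont : ∀ φ ∈ A, Continuous φ)
    (hrange : ∀ φ ∈ A, ∀ x, φ x ∈ Set.Icc (0 : ℝ) 1)
    (hsep : ∀ Z₁ Z₂ : Set Ω, IsZeroSet Z₁ → IsZeroSet Z₂ → Z₁ ∩ Z₂ = ∅ →
      ∃ φ ∈ A, closure (φ '' Z₁) ∩ closure (φ '' Z₂) = ∅)
    (𝓕 : Set (Set Ω)) (h𝓕 : IsZFilter 𝓕)
    (hsingle : ∀ φ ∈ A, ∃ r : ℝ, (⋂ F ∈ 𝓕, closure (φ '' F)) = {r}) :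
    ∃ p : StoneCech Ω, (⋂ F ∈ 𝓕, closure (stoneCechUnit '' F)) = {p} :=
  stmt_9_general A hcont hrange hsep 𝓕 h𝓕 hsingle
end

section
/- Stone–Weierstrass for C_b(Ω, X) with Heine–Borel target: Let Ω be a completely regular Hausdorff space, X a locally convex Hausdorff space in which every closed bounded set is compact, A ⊆ C(Ω, [0,1]) a multiplier of a subset W ⊆ C_b(Ω, X) which separates disjoint zero-sets of Ω, and suppose W contains the constant function t ↦ x for every x in some dense subset X₀ of X. Then the closure of W in the uniform topology equals C_b(Ω, X). -/
/-!
The multipliers of `W` form a submonoid of `Ω → [0,1]` stable under `φ ↦ 1 - φ`, so together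
with `φ` they contain `1 - (1 - φ ^ m) ^ k`, which for suitable `m, k` is close to a step
function of `φ`. Products of such steps separate two sets as soon as `φ` maps them onto sets
with disjoint closures; as `A` separates zero-sets, for each `x` there is a multiplier `ψₓ`,
nearly `1` where `p (f - x) ≤ ε / 4` and nearly `0` where `p (f - x) ≥ ε / 2`. The range of `f`
is relatively compact, so finitely many `x₁, …, xₙ ∈ X₀` cover it up to `ε / 4`, and the
iterated mixture `ψ₁ x₁ + (1 - ψ₁) (ψ₂ x₂ + (1 - ψ₂) (⋯ x₀))`, which lies in `W`, is `ε`-close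
to `f`.
-/

open Set

theorem exists_step_polynomial {a b δ : ℝ} (ha : 0 ≤ a) (hab : a < b) (hb : b ≤ 1) (hδ : 0 < δ) :
    ∃ m k : ℕ, ∀ t ∈ Icc (0 : ℝ) 1,
      (t ≤ a → 1 - (1 - t ^ m) ^ k ≤ δ) ∧ (b ≤ t → 1 - δ ≤ 1 - (1 - t ^ m) ^ k) := by
  have hb0 : 0 < b := ha.trans_lt hab
  -- `m` makes `(a / b) ^ m` negligible and `k ≈ 1 / (δ b ^ m)`; then Bernoulli's inequality
  -- handles `t ≤ a`, and `1 - s ≤ exp (-s)` handles `b ≤ t`.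
  obtain ⟨m, hm⟩ := exists_pow_lt_of_lt_one (lt_min (half_pos hδ) (by positivity : 0 < δ ^ 2 / 2))
    ((div_lt_one hb0).2 hab)
  set q := (a / b) ^ m
  have hbm : 0 < b ^ m := by positivity
  set k := ⌈1 / (δ * b ^ m)⌉₊
  have hk : 1 / δ ≤ k * b ^ m := by
    rw [← div_le_iff₀ hbm, div_div]; exact Nat.le_ceil _
  have hka : k * a ^ m ≤ δ := by
    have hk' : k * b ^ m ≤ 1 / δ + 1 := calc
      (k : ℝ) * b ^ m ≤ (1 / (δ * b ^ m) + 1) * b ^ m := by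
        gcongr; exact (Nat.ceil_lt_add_one (by positivity)).le
      _ = 1 / δ + b ^ m := by field_simp
      _ ≤ 1 / δ + 1 := by gcongr; exact pow_le_one₀ hb0.le hb
    have hq : a ^ m = q * b ^ m := by rw [← mul_pow, div_mul_cancel₀ _ hb0.ne']
    have h1 := hm.trans_le (min_le_left _ _)
    have h2 := hm.trans_le (min_le_right _ _)
    calc (k : ℝ) * a ^ m = k * b ^ m * q := by rw [hq]; ring
      _ ≤ (1 / δ + 1) * q := by gcongr
      _ = q / δ + q := by ring
      _ ≤ δ := by
        have : q / δ ≤ δ / 2 := by rw [div_le_iff₀ hδ]; nlinarith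
        linarith
  refine ⟨m, k, fun t ⟨ht0, ht1⟩ => ⟨fun hta => ?_, fun hbt => ?_⟩⟩
  · have hbern := one_add_mul_le_pow (a := -t ^ m) (by nlinarith [pow_le_one₀ ht0 ht1 (n := m)]) k
    have : (k : ℝ) * t ^ m ≤ k * a ^ m := by gcongr
    rw [← sub_eq_add_neg, mul_neg, ← sub_eq_add_neg] at hbern
    linarith
  · suffices (1 - t ^ m) ^ k ≤ δ by linarith
    have htm : b ^ m ≤ t ^ m := by gcongr
    calc (1 - t ^ m) ^ k ≤ Real.exp (-b ^ m) ^ k := by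
          gcongr
          · linarith [pow_le_one₀ ht0 ht1 (n := m)]
          · linarith [Real.one_sub_le_exp_neg (b ^ m)]
      _ = (Real.exp (k * b ^ m))⁻¹ := by rw [← Real.exp_nat_mul, ← Real.exp_neg, mul_neg]
      _ ≤ δ := by
        rw [inv_le_comm₀ (Real.exp_pos _) hδ, ← one_div]
        linarith [Real.add_one_le_exp (k * b ^ m)]

theorem prod_le_of_mem_of_forall_mem_Icc {ι : Type*} {s : Finset ι} {a : ι → ℝ}
    (ha : ∀ j ∈ s, a j ∈ Icc (0 : ℝ) 1) {i : ι} (hi : i ∈ s) : ∏ j ∈ s, a j ≤ a i := by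
  classical
  rw [← Finset.mul_prod_erase s a hi]
  exact mul_le_of_le_one_right (ha i hi).1 (Finset.prod_le_one
    (fun j hj => (ha j (Finset.mem_of_mem_erase hj)).1)
    (fun j hj => (ha j (Finset.mem_of_mem_erase hj)).2))

theorem one_sub_prod_one_sub_le_sum {ι : Type*} (s : Finset ι) {a : ι → ℝ}
    (ha : ∀ i ∈ s, a i ∈ Icc (0 : ℝ) 1) : 1 - ∏ i ∈ s, (1 - a i) ≤ ∑ i ∈ s, a i := by
  induction s using Finset.cons_induction with
  | empty => simp
  | cons i s hi ih =>
    rw [Finset.prod_cons, Finset.sum_cons]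
    have hs := ih fun j hj => ha j (Finset.mem_cons_of_mem hj)
    have hP : ∏ j ∈ s, (1 - a j) ≤ 1 := Finset.prod_le_one
      (fun j hj => by linarith [(ha j (Finset.mem_cons_of_mem hj)).2])
      (fun j hj => by linarith [(ha j (Finset.mem_cons_of_mem hj)).1])
    obtain ⟨hi0, hi1⟩ := ha i (Finset.mem_cons_self i s)
    nlinarith

theorem Seminorm.sub_convex_comb_le {X : Type*} [AddCommGroup X] [Module ℝ X]
    (p : Seminorm ℝ X) (y x z : X) {a : ℝ}
    (ha : a ∈ Icc (0 : ℝ) 1) :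
    p (y - (a • x + (1 - a) • z)) ≤ a * p (y - x) + (1 - a) * p (y - z) := by
  have : y - (a • x + (1 - a) • z) = a • (y - x) + (1 - a) • (y - z) := by module
  rw [this]
  refine (map_add_le_add p _ _).trans_eq ?_
  rw [map_smul_eq_mul, map_smul_eq_mul, Real.norm_of_nonneg ha.1,
    Real.norm_of_nonneg (sub_nonneg.2 ha.2)]

theorem IsCompact.exists_finset_subset_of_dense {X : Type*} [AddCommGroup X] [Module ℝ X]
    [TopologicalSpace X] [ContinuousSub X] {K X₀ : Set X} (hK : IsCompact K) (hX₀ : Dense X₀)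
    {p : Seminorm ℝ X} (hp : Continuous p) {r : ℝ} (hr : 0 < r) :
    ∃ t : Finset X, ↑t ⊆ X₀ ∧ ∀ y ∈ K, ∃ x ∈ t, p (y - x) < r := by
  have hopen : ∀ y : X, IsOpen {x | p (y - x) < r} := fun y =>
    isOpen_lt (hp.comp (continuous_const.sub continuous_id)) continuous_const
  obtain ⟨b, hbX₀, hb, hKb⟩ := hK.elim_finite_subcover_image (b := X₀)
    (c := fun x => {y | p (y - x) < r})
    (fun x _ => isOpen_lt (hp.comp (continuous_id.sub continuous_const)) continuous_const)
    fun y _ =>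
      let ⟨x, hx, hyx⟩ := hX₀.exists_mem_open (hopen y) ⟨y, by simpa using hr⟩
      mem_iUnion₂.2 ⟨x, hx, hyx⟩
  refine ⟨hb.toFinset, by simpa using hbX₀, fun y hy => ?_⟩
  obtain ⟨x, hx, hyx⟩ := mem_iUnion₂.1 (hKb hy)
  exact ⟨x, hb.mem_toFinset.2 hx, hyx⟩

section Multipliers

variable {Ω X : Type*} [AddCommGroup X] [Module ℝ X]

/-- `A` is a multiplier of `W` in the sense of the paper when `A ⊆ multipliers W`. -/
def multipliers (W : Set (Ω → X)) : Submonoid (Ω → ℝ) where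
  carrier := {φ | (∀ ω, φ ω ∈ Icc (0 : ℝ) 1) ∧
    ∀ g ∈ W, ∀ h ∈ W, (fun ω => φ ω • g ω + (1 - φ ω) • h ω) ∈ W}
  one_mem' := ⟨fun _ => ⟨zero_le_one, le_rfl⟩, fun g hg h _ => by simpa using hg⟩
  mul_mem' := by
    rintro φ ψ ⟨hφ01, hφ⟩ ⟨hψ01, hψ⟩
    refine ⟨fun ω => ⟨mul_nonneg (hφ01 ω).1 (hψ01 ω).1,
      mul_le_one₀ (hφ01 ω).2 (hψ01 ω).1 (hψ01 ω).2⟩, fun g hg h hh => ?_⟩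
    convert hφ _ (hψ g hg h hh) h hh using 2 with ω
    simp only [Pi.mul_apply]
    module

variable {W : Set (Ω → X)} {φ : Ω → ℝ}

theorem one_sub_mem_multipliers (hφ : φ ∈ multipliers W) : 1 - φ ∈ multipliers W := by
  obtain ⟨hφ01, hφ⟩ := hφ
  refine ⟨fun ω => ?_, fun g hg h hh => ?_⟩
  · have := hφ01 ω
    simp only [Pi.sub_apply, Pi.one_apply, mem_Icc] at this ⊢
    constructor <;> linarith
  · convert hφ h hh g hg using 2 with ω
    simp only [Pi.sub_apply, Pi.one_apply, sub_sub_cancel]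
    exact add_comm _ _

theorem zero_mem_multipliers : (0 : Ω → ℝ) ∈ multipliers W := by
  simpa using one_sub_mem_multipliers (one_mem (multipliers W))

theorem mem_multipliers_apply_mem_Icc (hφ : φ ∈ multipliers W) (ω : Ω) : φ ω ∈ Icc (0 : ℝ) 1 :=
  hφ.1 ω

theorem exists_step_mem_multipliers (hφ : φ ∈ multipliers W) {a b δ : ℝ} (hab : a < b)
    (hδ : 0 < δ) :
    ∃ ψ ∈ multipliers W, ∀ ω, (φ ω ≤ a → ψ ω ≤ δ) ∧ (b ≤ φ ω → 1 - δ ≤ ψ ω) := by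
  have hφ01 := mem_multipliers_apply_mem_Icc hφ
  rcases le_or_gt b 0 with hb0 | hb0
  · exact ⟨1, one_mem _, fun ω => ⟨fun h => by linarith [(hφ01 ω).1], fun _ => by simp; linarith⟩⟩
  rcases le_or_gt b 1 with hb1 | hb1
  · obtain ⟨m, k, hmk⟩ := exists_step_polynomial (le_max_right a 0) (max_lt hab hb0) hb1 hδ
    refine ⟨1 - (1 - φ ^ m) ^ k, one_sub_mem_multipliers (pow_mem
      (one_sub_mem_multipliers (pow_mem hφ m)) k), fun ω => ?_⟩
    simp only [Pi.sub_apply, Pi.one_apply, Pi.pow_apply]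
    exact ⟨fun h => (hmk _ (hφ01 ω)).1 (h.trans (le_max_left a 0)), (hmk _ (hφ01 ω)).2⟩
  · exact ⟨0, zero_mem_multipliers, fun ω =>
      ⟨fun _ => hδ.le, fun h => by linarith [(hφ01 ω).2]⟩⟩

theorem exists_bump_mem_multipliers (hφ : φ ∈ multipliers W) (c : ℝ) {r δ : ℝ} (hr : 0 < r)
    (hδ : 0 < δ) :
    ∃ β ∈ multipliers W, ∀ ω, (|φ ω - c| ≤ r → 1 - δ ≤ β ω) ∧ (2 * r ≤ |φ ω - c| → β ω ≤ δ) := by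
  obtain ⟨L, hL, hLle⟩ :=
    exists_step_mem_multipliers hφ (by linarith : c - 2 * r < c - r) (half_pos hδ)
  obtain ⟨R, hR, hRle⟩ :=
    exists_step_mem_multipliers hφ (by linarith : c + r < c + 2 * r) (half_pos hδ)
  refine ⟨L * (1 - R), mul_mem hL (one_sub_mem_multipliers hR),
    fun ω => ⟨fun h => ?_, fun h => ?_⟩⟩
  all_goals
    obtain ⟨hL0, hL1⟩ := mem_multipliers_apply_mem_Icc hL ω
    obtain ⟨hR0, hR1⟩ := mem_multipliers_apply_mem_Icc hR ω
    simp only [Pi.mul_apply, Pi.sub_apply, Pi.one_apply]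
  · obtain ⟨h₁, h₂⟩ := abs_le.1 h
    have := (hLle ω).2 (by linarith)
    have := (hRle ω).1 (by linarith)
    nlinarith
  · rcases le_abs'.1 h with h | h
    · have := (hLle ω).1 (by linarith)
      nlinarith
    · have := (hRle ω).2 (by linarith)
      nlinarith

theorem exists_mem_multipliers_biUnion {ι : Type*} (t : Finset ι) {S : Set Ω}
    {T : ι → Set Ω}
    (h : ∀ i ∈ t, ∀ δ > 0, ∃ ψ ∈ multipliers W, (∀ ω ∈ S, ψ ω ≤ δ) ∧ (∀ ω ∈ T i, 1 - δ ≤ ψ ω))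
    {δ : ℝ} (hδ : 0 < δ) :
    ∃ ψ ∈ multipliers W, (∀ ω ∈ S, ψ ω ≤ δ) ∧ (∀ ω ∈ ⋃ i ∈ t, T i, 1 - δ ≤ ψ ω) := by
  set δ' := δ / (t.card + 1)
  have hδ'δ : δ' ≤ δ := div_le_self hδ.le (by simp)
  choose! ψ hψ hψS hψT using fun i hi => h i hi δ' (by positivity)
  have hψ01 : ∀ ω, ∀ i ∈ t, ψ i ω ∈ Icc (0 : ℝ) 1 := fun ω i hi =>
    mem_multipliers_apply_mem_Icc (hψ i hi) ω
  refine ⟨1 - ∏ i ∈ t, (1 - ψ i),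
    one_sub_mem_multipliers (prod_mem fun i hi => one_sub_mem_multipliers (hψ i hi)),
    fun ω hω => ?_, fun ω hω => ?_⟩
  all_goals simp only [Pi.sub_apply, Pi.one_apply, Finset.prod_apply]
  · calc 1 - ∏ i ∈ t, (1 - ψ i ω) ≤ ∑ i ∈ t, ψ i ω := one_sub_prod_one_sub_le_sum t (hψ01 ω)
      _ ≤ t.card * δ' := by simpa using Finset.sum_le_sum fun i hi => hψS i hi ω hω
      _ ≤ δ := by
        rw [mul_div_assoc', div_le_iff₀ (by positivity)]
        nlinarith
  · obtain ⟨i, hi, hωi⟩ := mem_iUnion₂.1 hω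
    have := prod_le_of_mem_of_forall_mem_Icc (a := fun i => 1 - ψ i ω)
      (fun i hi => ⟨sub_nonneg.2 (hψ01 ω i hi).2, by linarith [(hψ01 ω i hi).1]⟩) hi
    linarith [hψT i hi ω hωi]

theorem exists_mem_multipliers_of_disjoint_closure_image (hφ : φ ∈ multipliers W)
    {S₀ S₁ : Set Ω} (hS : closure (φ '' S₀) ∩ closure (φ '' S₁) = ∅) {δ : ℝ} (hδ : 0 < δ) :
    ∃ ψ ∈ multipliers W, (∀ ω ∈ S₀, ψ ω ≤ δ) ∧ (∀ ω ∈ S₁, 1 - δ ≤ ψ ω) := by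
  have hK₁ : IsCompact (closure (φ '' S₁)) := isCompact_Icc.of_isClosed_subset isClosed_closure
    (closure_minimal (image_subset_iff.2 fun ω _ => mem_multipliers_apply_mem_Icc hφ ω)
      isClosed_Icc)
  have hK₀ : ∀ c ∈ closure (φ '' S₁), c ∈ (closure (φ '' S₀))ᶜ := fun c hc h =>
    (eq_empty_iff_forall_notMem.1 hS) c ⟨h, hc⟩
  choose! ρ hρ hρK₀ using fun c hc =>
    Metric.isOpen_iff.1 isClosed_closure.isOpen_compl c (hK₀ c hc)
  obtain ⟨t, htK₁, hcover⟩ := hK₁.elim_nhds_subcover (fun c => Metric.ball c (ρ c / 2))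
    fun c hc => Metric.ball_mem_nhds c (half_pos (hρ c hc))
  have hbump : ∀ c ∈ t, ∀ δ > 0, ∃ β ∈ multipliers W,
      (∀ ω ∈ S₀, β ω ≤ δ) ∧ (∀ ω ∈ {ω | |φ ω - c| ≤ ρ c / 2}, 1 - δ ≤ β ω) := by
    intro c hc δ hδ
    obtain ⟨β, hβ, hβle⟩ := exists_bump_mem_multipliers hφ c (half_pos (hρ c (htK₁ c hc))) hδ
    refine ⟨β, hβ, fun ω hω => (hβle ω).2 ?_, fun ω hω => (hβle ω).1 hω⟩
    have : φ ω ∉ Metric.ball c (ρ c) := fun h =>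
      hρK₀ c (htK₁ c hc) h (subset_closure (mem_image_of_mem φ hω))
    rw [Metric.mem_ball, Real.dist_eq, not_lt] at this
    linarith
  obtain ⟨ψ, hψ, hψS₀, hψS₁⟩ := exists_mem_multipliers_biUnion t hbump hδ
  refine ⟨ψ, hψ, hψS₀, fun ω hω => hψS₁ ω ?_⟩
  obtain ⟨c, hc, hωc⟩ := mem_iUnion₂.1 (hcover (subset_closure (mem_image_of_mem φ hω)))
  rw [Metric.mem_ball, Real.dist_eq] at hωc
  exact mem_iUnion₂.2 ⟨c, hc, hωc.le⟩

end Multipliers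

section ZeroSets

variable {Ω : Type*} [TopologicalSpace Ω]

def SeparatesZeroSets (A : Set (Ω → ℝ)) : Prop :=
  ∀ Z₁ Z₂ : Set Ω, IsZeroSet Z₁ → IsZeroSet Z₂ → Z₁ ∩ Z₂ = ∅ →
    ∃ φ ∈ A, closure (φ '' Z₁) ∩ closure (φ '' Z₂) = ∅

variable {u : Ω → ℝ}

theorem isZeroSet_setOf_le_s12 (hu : Continuous u) (a : ℝ) : IsZeroSet {ω | u ω ≤ a} :=
  ⟨fun ω => max (u ω - a) 0, by fun_prop, by ext; simp⟩

theorem isZeroSet_setOf_ge (hu : Continuous u) (a : ℝ) : IsZeroSet {ω | a ≤ u ω} := by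
  simpa using isZeroSet_setOf_le_s12 hu.neg (-a)

theorem exists_mem_multipliers_of_separatesZeroSets {X : Type*} [AddCommGroup X] [Module ℝ X]
    {W : Set (Ω → X)} {A : Set (Ω → ℝ)} (hA : A ⊆ multipliers W) (hsep : SeparatesZeroSets A)
    (hu : Continuous u) {a b δ : ℝ} (hab : a < b) (hδ : 0 < δ) :
    ∃ ψ ∈ multipliers W, ∀ ω, (b ≤ u ω → ψ ω ≤ δ) ∧ (u ω ≤ a → 1 - δ ≤ ψ ω) := by
  have hdisj : {ω | b ≤ u ω} ∩ {ω | u ω ≤ a} = ∅ :=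
    eq_empty_of_forall_notMem fun _ ⟨h₁, h₂⟩ => (h₁.trans h₂).not_gt hab
  obtain ⟨φ, hφA, hφ⟩ := hsep _ _ (isZeroSet_setOf_ge hu b) (isZeroSet_setOf_le_s12 hu a) hdisj
  obtain ⟨ψ, hψ, h₀, h₁⟩ := exists_mem_multipliers_of_disjoint_closure_image (hA hφA) hφ hδ
  exact ⟨ψ, hψ, fun ω => ⟨h₀ ω, h₁ ω⟩⟩

end ZeroSets

section Approximation

variable {Ω X : Type*} [AddCommGroup X] [Module ℝ X] {W : Set (Ω → X)}

theorem exists_mem_sub_le_of_mem_multipliers (p : Seminorm ℝ X) (f : Ω → X) (s : Finset X)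
    {ψ : X → Ω → ℝ} (hψ : ∀ x ∈ s, ψ x ∈ multipliers W) (hs : ∀ x ∈ s, (fun _ => x) ∈ W)
    {g₀ : Ω → X} (hg₀ : g₀ ∈ W) {ε η : ℝ} (hε : 0 ≤ ε) (hη : 0 ≤ η)
    (hψp : ∀ x ∈ s, ∀ ω, ψ x ω * p (f ω - x) ≤ ψ x ω * ε + η) :
    ∃ g ∈ W, ∀ ω,
      p (f ω - g ω) ≤ ε + s.card * η + (∏ x ∈ s, (1 - ψ x ω)) * p (f ω - g₀ ω) := by
  classical
  induction s using Finset.induction_on with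
  | empty => exact ⟨g₀, hg₀, fun ω => by simpa using hε⟩
  | insert x s hx ih =>
    obtain ⟨g, hg, hgle⟩ := ih (fun y hy => hψ y (Finset.mem_insert_of_mem hy))
      (fun y hy => hs y (Finset.mem_insert_of_mem hy))
      (fun y hy => hψp y (Finset.mem_insert_of_mem hy))
    have hx' := Finset.mem_insert_self x s
    refine ⟨fun ω => ψ x ω • x + (1 - ψ x ω) • g ω, (hψ x hx').2 _ (hs x hx') _ hg,
      fun ω => ?_⟩
    obtain ⟨ha0, ha1⟩ := mem_multipliers_apply_mem_Icc (hψ x hx') ω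
    have hcard : (0 : ℝ) ≤ s.card * η := by positivity
    calc p (f ω - (ψ x ω • x + (1 - ψ x ω) • g ω))
        ≤ ψ x ω * p (f ω - x) + (1 - ψ x ω) * p (f ω - g ω) :=
          p.sub_convex_comb_le _ _ _ ⟨ha0, ha1⟩
      _ ≤ (ψ x ω * ε + η) + (1 - ψ x ω) *
          (ε + s.card * η + (∏ y ∈ s, (1 - ψ y ω)) * p (f ω - g₀ ω)) :=
          add_le_add (hψp x hx' ω) (mul_le_mul_of_nonneg_left (hgle ω) (sub_nonneg.2 ha1))
      _ ≤ ε + (insert x s).card * η + (∏ y ∈ insert x s, (1 - ψ y ω)) * p (f ω - g₀ ω) := by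
          rw [Finset.card_insert_of_notMem hx, Finset.prod_insert hx]
          push_cast
          nlinarith

theorem exists_mem_seminorm_sub_lt_of_finset_cover [TopologicalSpace Ω] [TopologicalSpace X]
    [ContinuousSub X] {A : Set (Ω → ℝ)} (hA : A ⊆ multipliers W) (hsep : SeparatesZeroSets A)
    {f : Ω → X} (hf : Continuous f) {p : Seminorm ℝ X} (hp : Continuous p) {s : Finset X}
    (hs : ∀ x ∈ s, (fun _ => x) ∈ W) {x₀ : X} (hx₀ : x₀ ∈ s) {B : ℝ} (hB0 : 0 ≤ B)
    (hB : ∀ ω, ∀ x ∈ s, p (f ω - x) ≤ B) {ε : ℝ} (hε : 0 < ε)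
    (hcover : ∀ ω, ∃ x ∈ s, p (f ω - x) < ε / 4) :
    ∃ g ∈ W, ∀ ω, p (f ω - g ω) < ε := by
  set δ := ε / (4 * (s.card + 1) * (B + 1)) with hδdef
  have hδ : 0 < δ := by positivity
  choose ψ hψ hψle using fun x : X => exists_mem_multipliers_of_separatesZeroSets hA hsep
    (hp.comp (hf.sub continuous_const) : Continuous fun ω => p (f ω - x))
    (by linarith : ε / 4 < ε / 2) hδ
  have hψ01 := fun x => mem_multipliers_apply_mem_Icc (hψ x)
  -- Either `x` is within `ε / 2` of `f ω`, or its weight `ψ x ω` is at most `δ`.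
  have hψp : ∀ x ∈ s, ∀ ω, ψ x ω * p (f ω - x) ≤ ψ x ω * (ε / 2) + δ * B := by
    intro x hx ω
    obtain ⟨ha0, ha1⟩ := hψ01 x ω
    rcases lt_or_ge (p (f ω - x)) (ε / 2) with hlt | hge
    · nlinarith [mul_le_mul_of_nonneg_left hlt.le ha0, mul_nonneg hδ.le hB0]
    · nlinarith [(hψle x ω).1 hge, apply_nonneg p (f ω - x), hB ω x hx]
  obtain ⟨g, hg, hgle⟩ := exists_mem_sub_le_of_mem_multipliers p f s (fun x _ => hψ x) hs
    (hs x₀ hx₀) (by positivity : 0 ≤ ε / 2) (by positivity : 0 ≤ δ * B) hψp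
  refine ⟨g, hg, fun ω => ?_⟩
  obtain ⟨x, hxs, hx⟩ := hcover ω
  have hprod : ∏ y ∈ s, (1 - ψ y ω) ≤ δ :=
    (prod_le_of_mem_of_forall_mem_Icc (fun y _ => ⟨sub_nonneg.2 (hψ01 y ω).2,
      by linarith [(hψ01 y ω).1]⟩) hxs).trans (by linarith [(hψle x ω).2 hx.le])
  have hB1 : B / (B + 1) < 1 := (div_lt_one (by positivity)).2 (by linarith)
  calc p (f ω - g ω)
      ≤ ε / 2 + s.card * (δ * B) + (∏ y ∈ s, (1 - ψ y ω)) * p (f ω - x₀) := hgle ω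
    _ ≤ ε / 2 + s.card * (δ * B) + δ * B := by gcongr; exact hB ω x₀ hx₀
    _ = ε / 2 + ε / 4 * (B / (B + 1)) := by rw [hδdef]; field_simp; ring
    _ < ε := by nlinarith

end Approximation

theorem stmt_12_general {Ω X : Type*} [TopologicalSpace Ω]
    [AddCommGroup X] [Module ℝ X] [TopologicalSpace X]
    [IsTopologicalAddGroup X] [ContinuousSMul ℝ X]
    [T2Space X]
    (hHB : ∀ s : Set X, IsClosed s → Bornology.IsVonNBounded ℝ s → IsCompact s)
    (A : Set (Ω → ℝ)) (W : Set (Ω → X))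
    (hA01 : ∀ φ ∈ A, ∀ x, φ x ∈ Set.Icc (0 : ℝ) 1)
    (hmul : ∀ φ ∈ A, ∀ g ∈ W, ∀ h ∈ W,
      (fun x => φ x • g x + (1 - φ x) • h x) ∈ W)
    (hsep : ∀ Z₁ Z₂ : Set Ω, IsZeroSet Z₁ → IsZeroSet Z₂ → Z₁ ∩ Z₂ = ∅ →
      ∃ φ ∈ A, closure (φ '' Z₁) ∩ closure (φ '' Z₂) = ∅)
    (X₀ : Set X) (hX₀ : Dense X₀)
    (hconst : ∀ x ∈ X₀, (fun _ : Ω => x) ∈ W) :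
    ∀ f : Ω → X, Continuous f → Bornology.IsVonNBounded ℝ (Set.range f) →
      ∀ p : Seminorm ℝ X, Continuous p → ∀ ε > (0 : ℝ),
        ∃ g ∈ W, ∀ x : Ω, p (f x - g x) < ε := by
  classical
  intro f hf hbdd p hp ε hε
  have hK : IsCompact (closure (range f)) := hHB _ isClosed_closure hbdd.closure
  have hfK : ∀ ω, f ω ∈ closure (range f) := fun ω => subset_closure ⟨ω, rfl⟩
  obtain ⟨C, hC⟩ := (hK.image hp).bddAbove
  obtain ⟨x₀, hx₀⟩ := hX₀.nonempty
  obtain ⟨t, htX₀, hcover⟩ := hK.exists_finset_subset_of_dense hX₀ hp (by positivity : 0 < ε / 4)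
  set s := insert x₀ t
  have hsX₀ : ↑s ⊆ X₀ := by simpa [s, insert_subset_iff] using ⟨hx₀, htX₀⟩
  have hB : ∀ ω, ∀ x ∈ s, p (f ω - x) ≤ max C 0 + ∑ y ∈ s, p y := fun ω x hx =>
    calc p (f ω - x) ≤ p (f ω) + p x := map_sub_le_add p _ _
      _ ≤ max C 0 + ∑ y ∈ s, p y :=
        add_le_add ((hC (mem_image_of_mem p (hfK ω))).trans (le_max_left C 0))
          (Finset.single_le_sum (fun y _ => apply_nonneg p y) hx)
  refine exists_mem_seminorm_sub_lt_of_finset_cover (fun φ hφ => ⟨hA01 φ hφ, hmul φ hφ⟩) hsep hf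
    hp (fun x hx => hconst x (hsX₀ hx)) (Finset.mem_insert_self x₀ t) (by positivity) hB hε
    fun ω => ?_
  obtain ⟨x, hxt, hx⟩ := hcover (f ω) (hfK ω)
  exact ⟨x, Finset.mem_insert_of_mem hxt, hx⟩

theorem stmt_12 {Ω X : Type*} [TopologicalSpace Ω] [CompletelyRegularSpace Ω]
    [T2Space Ω] [AddCommGroup X] [Module ℝ X] [TopologicalSpace X]
    [IsTopologicalAddGroup X] [ContinuousSMul ℝ X] [LocallyConvexSpace ℝ X]
    [T2Space X]
    (hHB : ∀ s : Set X, IsClosed s → Bornology.IsVonNBounded ℝ s → IsCompact s)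
    (A : Set (Ω → ℝ)) (W : Set (Ω → X))
    (hAc : ∀ φ ∈ A, Continuous φ)
    (hA01 : ∀ φ ∈ A, ∀ x, φ x ∈ Set.Icc (0 : ℝ) 1)
    (hmul : ∀ φ ∈ A, ∀ g ∈ W, ∀ h ∈ W,
      (fun x => φ x • g x + (1 - φ x) • h x) ∈ W)
    (hsep : ∀ Z₁ Z₂ : Set Ω, IsZeroSet Z₁ → IsZeroSet Z₂ → Z₁ ∩ Z₂ = ∅ →
      ∃ φ ∈ A, closure (φ '' Z₁) ∩ closure (φ '' Z₂) = ∅)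
    (hW : ∀ g ∈ W, Continuous g ∧ Bornology.IsVonNBounded ℝ (Set.range g))
    (X₀ : Set X) (hX₀ : Dense X₀)
    (hconst : ∀ x ∈ X₀, (fun _ : Ω => x) ∈ W) :
    ∀ f : Ω → X, Continuous f → Bornology.IsVonNBounded ℝ (Set.range f) →
      ∀ p : Seminorm ℝ X, Continuous p → ∀ ε > (0 : ℝ),
        ∃ g ∈ W, ∀ x : Ω, p (f x - g x) < ε :=
  stmt_12_general hHB A W hA01 hmul hsep X₀ hX₀ hconst
end

section
/- Let Ω be a completely regular Hausdorff space, X a locally convex Hausdorff space, and X₀ a dense subset of X. Then the linear span of {φ ⊗ x : φ ∈ C_b(Ω, ℂ), x ∈ X₀}, where (φ ⊗ x)(t) = φ(t)·x, is dense in the uniform topology in the space 𝒦C(Ω, X) of continuous functions Ω → X with relatively compact range. -/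
/-!
Cover the compact closure of the range of `f` by finitely many `p`-balls of radius `ε / 2`
centred at points of `X₀`, which density allows. The tent functions of these balls, composed
with `f` and normalised, form a bounded continuous partition of unity on `Ω`; by convexity of `p`
the corresponding combination of the centres stays within `ε / 2` of `f`.
-/

open Finset

namespace Seminorm

variable {𝕜 X : Type*} [RCLike 𝕜] [AddCommGroup X] [Module 𝕜 X]

lemma sub_sum_smul_le (p : Seminorm 𝕜 X) {ι : Type*} {s : Finset ι} {c : ι → ℝ}
    (hc₀ : ∀ i ∈ s, 0 ≤ c i) (hc₁ : ∑ i ∈ s, c i = 1) (y : X) (x : ι → X) :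
    p (y - ∑ i ∈ s, (c i : 𝕜) • x i) ≤ ∑ i ∈ s, c i * p (y - x i) := by
  have hy : y - ∑ i ∈ s, (c i : 𝕜) • x i = ∑ i ∈ s, (c i : 𝕜) • (y - x i) := by
    simp only [smul_sub, sum_sub_distrib, ← sum_smul, ← RCLike.ofReal_sum, hc₁,
      RCLike.ofReal_one, one_smul]
  rw [hy]
  refine (le_sum_of_subadditive p (map_zero p).le (map_add_le_add p) _ _).trans_eq
    (sum_congr rfl fun i hi => ?_)
  rw [map_smul_eq_mul, RCLike.norm_ofReal, abs_of_nonneg (hc₀ i hi)]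

def ballBump (p : Seminorm 𝕜 X) (z : X) (r : ℝ) (y : X) : ℝ := max 0 (r - p (y - z))

lemma ballBump_nonneg (p : Seminorm 𝕜 X) (z : X) (r : ℝ) (y : X) : 0 ≤ p.ballBump z r y :=
  le_max_left _ _

lemma ballBump_pos_iff {p : Seminorm 𝕜 X} {z : X} {r : ℝ} {y : X} :
    0 < p.ballBump z r y ↔ y ∈ p.ball z r := by
  simp [ballBump, mem_ball]

lemma ballBump_mul_le (p : Seminorm 𝕜 X) (z : X) (r : ℝ) (y : X) :
    p.ballBump z r y * p (y - z) ≤ p.ballBump z r y * r := by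
  rcases (p.ballBump_nonneg z r y).eq_or_lt with h | h
  · rw [← h, zero_mul, zero_mul]
  · exact mul_le_mul_of_nonneg_left ((p.mem_ball).1 (ballBump_pos_iff.1 h)).le h.le

lemma sub_sum_ballBump_smul_le (p : Seminorm 𝕜 X) (T : Finset X) (r : ℝ) {y : X}
    (hy : 0 < ∑ z ∈ T, p.ballBump z r y) :
    p (y - ∑ z ∈ T, ((p.ballBump z r y / ∑ z ∈ T, p.ballBump z r y : ℝ) : 𝕜) • z) ≤ r := by
  set S := ∑ z ∈ T, p.ballBump z r y
  refine (p.sub_sum_smul_le (fun z _ => div_nonneg (p.ballBump_nonneg z r y) hy.le)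
    (by rw [← sum_div, div_self hy.ne']) y id).trans ?_
  calc ∑ z ∈ T, p.ballBump z r y / S * p (y - z)
      = (∑ z ∈ T, p.ballBump z r y * p (y - z)) / S := by simp only [sum_div, div_mul_eq_mul_div]
    _ ≤ (∑ z ∈ T, p.ballBump z r y * r) / S :=
      div_le_div_of_nonneg_right (sum_le_sum fun z _ => p.ballBump_mul_le z r y) hy.le
    _ = r := by rw [← sum_mul, mul_div_cancel_left₀ r hy.ne']

variable [TopologicalSpace X] [IsTopologicalAddGroup X] {p : Seminorm 𝕜 X}

lemma continuous_ballBump (hp : Continuous p) (z : X) (r : ℝ) : Continuous (p.ballBump z r) :=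
  continuous_const.max (continuous_const.sub (hp.comp (continuous_id.sub continuous_const)))

lemma isOpen_ball_of_continuous (hp : Continuous p) (z : X) (r : ℝ) : IsOpen (p.ball z r) :=
  isOpen_lt (hp.comp (continuous_id.sub continuous_const)) continuous_const

lemma exists_finset_subset_compact_subset_iUnion_ball (hp : Continuous p) {K D : Set X}
    (hK : IsCompact K) (hD : Dense D) {r : ℝ} (hr : 0 < r) :
    ∃ T : Finset X, ↑T ⊆ D ∧ K ⊆ ⋃ z ∈ T, p.ball z r := by
  have hcov : K ⊆ ⋃ z ∈ D, p.ball z r := fun y _ => by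
    obtain ⟨z, hzD, hz⟩ := hD.exists_mem_open (isOpen_ball_of_continuous hp y r)
      ⟨y, p.mem_ball_self hr⟩
    rw [mem_ball, map_sub_rev] at hz
    exact Set.mem_biUnion hzD (p.mem_ball.2 hz)
  obtain ⟨T, hTD, hTfin, hKT⟩ :=
    hK.elim_finite_subcover_image (fun z _ => isOpen_ball_of_continuous hp z r) hcov
  exact ⟨hTfin.toFinset, by simpa using hTD, by simpa using hKT⟩

lemma exists_continuous_weights_sub_sum_smul_le (hp : Continuous p) {Ω : Type*}
    [TopologicalSpace Ω] {f : Ω → X} (hf : Continuous f) {T : Finset X} {r : ℝ}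
    (hfT : Set.range f ⊆ ⋃ z ∈ T, p.ball z r) :
    ∃ w : X → Ω → ℝ, (∀ z, Continuous (w z)) ∧ (∀ z ∈ T, ∀ t, w z t ∈ Set.Icc 0 1) ∧
      ∀ t, p (f t - ∑ z ∈ T, (w z t : 𝕜) • z) ≤ r := by
  have hS : ∀ t, 0 < ∑ z ∈ T, p.ballBump z r (f t) := fun t => by
    obtain ⟨z, hz, hfz⟩ := Set.mem_iUnion₂.1 (hfT ⟨t, rfl⟩)
    exact sum_pos' (fun z _ => p.ballBump_nonneg z r _) ⟨z, hz, ballBump_pos_iff.2 hfz⟩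
  refine ⟨fun z t => p.ballBump z r (f t) / ∑ z ∈ T, p.ballBump z r (f t), fun z => ?_,
    fun z hz t => ⟨?_, ?_⟩, fun t => p.sub_sum_ballBump_smul_le T r (hS t)⟩
  · exact ((continuous_ballBump hp z r).comp hf).div
      (_root_.continuous_finsetSum _ fun z _ => (continuous_ballBump hp z r).comp hf)
      fun t => (hS t).ne'
  · exact div_nonneg (p.ballBump_nonneg z r _) (hS t).le
  · exact (div_le_one (hS t)).2 (single_le_sum (fun z _ => p.ballBump_nonneg z r _) hz)

end Seminorm

theorem stmt_13_general {Ω X : Type*} [TopologicalSpace Ω] [AddCommGroup X] [Module ℂ X]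
    [TopologicalSpace X] [IsTopologicalAddGroup X] (X₀ : Set X) (hX₀ : Dense X₀) :
    ∀ f : Ω → X, Continuous f → IsCompact (closure (Set.range f)) →
      ∀ p : Seminorm ℂ X, Continuous p → ∀ ε > (0 : ℝ),
        ∃ g ∈ Submodule.span ℂ {h : Ω → X | ∃ (φ : Ω → ℂ) (x : X),
          Continuous φ ∧ Bornology.IsBounded (Set.range φ) ∧ x ∈ X₀ ∧
            h = fun t => φ t • x},
          ∀ t : Ω, p (f t - g t) < ε := by
  intro f hf hK p hp ε hε
  obtain ⟨T, hTX₀, hKT⟩ :=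
    p.exists_finset_subset_compact_subset_iUnion_ball hp hK hX₀ (half_pos hε)
  obtain ⟨w, hw_cont, hw_mem, hw_approx⟩ :=
    p.exists_continuous_weights_sub_sum_smul_le (𝕜 := ℂ) hp hf (subset_closure.trans hKT)
  refine ⟨∑ z ∈ T, fun t => (w z t : ℂ) • z, Submodule.sum_mem _ fun z hz => ?_,
    fun t => by rw [Finset.sum_apply]; exact (hw_approx t).trans_lt (half_lt_self hε)⟩
  refine Submodule.subset_span ⟨fun t => w z t, z, Complex.continuous_ofReal.comp (hw_cont z),
    (Metric.isBounded_closedBall (x := 0) (r := 1)).subset ?_, hTX₀ hz, rfl⟩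
  rintro _ ⟨t, rfl⟩
  obtain ⟨hw₀, hw₁⟩ := hw_mem z hz t
  simpa [abs_of_nonneg hw₀] using hw₁

theorem stmt_13 {Ω X : Type*} [TopologicalSpace Ω] [CompletelyRegularSpace Ω]
    [T2Space Ω] [AddCommGroup X] [Module ℂ X] [TopologicalSpace X]
    [IsTopologicalAddGroup X] [ContinuousSMul ℂ X] [LocallyConvexSpace ℝ X]
    [T2Space X] (X₀ : Set X) (hX₀ : Dense X₀) :
    ∀ f : Ω → X, Continuous f → IsCompact (closure (Set.range f)) →
      ∀ p : Seminorm ℂ X, Continuous p → ∀ ε > (0 : ℝ),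
        ∃ g ∈ Submodule.span ℂ {h : Ω → X | ∃ (φ : Ω → ℂ) (x : X),
          Continuous φ ∧ Bornology.IsBounded (Set.range φ) ∧ x ∈ X₀ ∧
            h = fun t => φ t • x},
          ∀ t : Ω, p (f t - g t) < ε :=
  stmt_13_general X₀ hX₀
end

section
/- Let Ω be a paracompact Hausdorff space, X a locally convex space with continuous seminorm p, X₀ a dense linear subspace of X, and f ∈ C(Ω, X). Then for every ε > 0 there exists g ∈ C(Ω, X₀) (a continuous function with values in X₀) such that sup_{t ∈ Ω} p(f(t) − g(t)) < ε. -/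
open Filter Topology

/-! By density of `X₀`, every point `t` has some `c ∈ X₀` with `p (f t - c) < ε`, and by
continuity this constant stays `ε`-close to `f` on a neighbourhood of `t`. The sets
`X₀ ∩ {x | p (f s - x) < ε}` are convex, so a partition of unity subordinate to these
neighbourhoods glues the local constants into a continuous `g` with values in `X₀` that is
`ε`-close to `f` everywhere. -/

namespace Seminorm

variable {𝕜 E : Type*} [SeminormedRing 𝕜] [AddCommGroup E] [SMul 𝕜 E] (p : Seminorm 𝕜 E)

theorem mem_ball_comm {x y : E} {r : ℝ} : x ∈ p.ball y r ↔ y ∈ p.ball x r := by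
  rw [mem_ball, mem_ball, map_sub_rev]

theorem isOpen_ball [TopologicalSpace E] [ContinuousSub E] (hp : Continuous p) (x : E) (r : ℝ) :
    IsOpen (p.ball x r) :=
  isOpen_lt (hp.comp (continuous_id.sub continuous_const)) continuous_const

end Seminorm

theorem stmt_14_general {Ω X : Type*} [TopologicalSpace Ω] [ParacompactSpace Ω]
    [T2Space Ω] [AddCommGroup X] [Module ℝ X] [TopologicalSpace X]
    [IsTopologicalAddGroup X] [ContinuousSMul ℝ X]
    (p : Seminorm ℝ X) (hp : Continuous p)
    (X₀ : Submodule ℝ X) (hX₀ : Dense (X₀ : Set X))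
    (f : Ω → X) (hf : Continuous f) :
    ∀ ε > (0 : ℝ), ∃ g : Ω → X, Continuous g ∧ (∀ t, g t ∈ X₀) ∧
      ∀ t : Ω, p (f t - g t) < ε := by
  intro ε hε
  have hlocal : ∀ t, ∃ c : X, ∀ᶠ s in 𝓝 t, c ∈ (X₀ : Set X) ∩ p.ball (f s) ε := by
    intro t
    obtain ⟨c, hcX₀, hc⟩ :=
      hX₀.exists_mem_open (p.isOpen_ball hp (f t) ε) ⟨f t, p.mem_ball_self hε⟩
    have hnear : ∀ᶠ s in 𝓝 t, f s ∈ p.ball c ε :=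
      hf.continuousAt.preimage_mem_nhds ((p.isOpen_ball hp c ε).mem_nhds (p.mem_ball_comm.1 hc))
    exact ⟨c, hnear.mono fun s hs => ⟨hcX₀, p.mem_ball_comm.1 hs⟩⟩
  obtain ⟨g, hg⟩ := exists_continuous_forall_mem_convex_of_local_const
    (fun s => X₀.convex.inter (p.convex_ball (f s) ε)) hlocal
  exact ⟨g, g.continuous, fun t => (hg t).1,
    fun t => by simpa only [Seminorm.mem_ball, map_sub_rev] using (hg t).2⟩

theorem stmt_14 {Ω X : Type*} [TopologicalSpace Ω] [ParacompactSpace Ω]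
    [T2Space Ω] [AddCommGroup X] [Module ℝ X] [TopologicalSpace X]
    [IsTopologicalAddGroup X] [ContinuousSMul ℝ X] [LocallyConvexSpace ℝ X]
    (p : Seminorm ℝ X) (hp : Continuous p)
    (X₀ : Submodule ℝ X) (hX₀ : Dense (X₀ : Set X))
    (f : Ω → X) (hf : Continuous f) :
    ∀ ε > (0 : ℝ), ∃ g : Ω → X, Continuous g ∧ (∀ t, g t ∈ X₀) ∧
      ∀ t : Ω, p (f t - g t) < ε :=
  stmt_14_general p hp X₀ hX₀ f hf
end

section
/- Let Ω be a topological space, X a separable locally convex space with continuous seminorm p, X₀ a dense linear subspace of X, and f ∈ C(Ω, X). Then for every ε > 0 there exists a continuous g : Ω → X₀ such that sup_{t ∈ Ω} p(f(t) − g(t)) < ε. -/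
/-!
Cover `Ω` by the cozero sets `{t | p (x n - f t) < ε / 2}` of a dense sequence `x`, and choose
`y n ∈ X₀` with `p (y n - x n) < ε / 2`. Any countable cozero cover of a topological space, with
no separation axiom, carries a locally finite partition of unity `ρ` with `ρ n` supported in the
`n`-th set: replace `φ n` by `max 0 (φ n - n * ∑ k < n, φ k)` and normalize. Then
`g = ∑ ρ n • y n` is continuous, and `g t` is a convex combination of points of the convex set
`X₀ ∩ {z | p (z - f t) < ε}`.
-/

open Function Set

theorem exists_partitionOfUnity_of_locallyFinite {ι Ω : Type*} [TopologicalSpace Ω]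
    {ψ : ι → Ω → ℝ} (hψ : ∀ i, Continuous (ψ i)) (hψ_nonneg : ∀ i t, 0 ≤ ψ i t)
    (hlf : LocallyFinite fun i => support (ψ i))
    (hcover : ∀ t, ∃ i, ψ i t ≠ 0) :
    ∃ ρ : PartitionOfUnity ι Ω, ∀ i, support (ρ i) ⊆ support (ψ i) := by
  set σ : Ω → ℝ := fun t => ∑ᶠ i, ψ i t
  have hσ_pos : ∀ t, 0 < σ t := fun t => by
    obtain ⟨i, hi⟩ := hcover t
    exact finsum_pos (fun i => hψ_nonneg i t) ⟨i, (hψ_nonneg i t).lt_of_ne' hi⟩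
      (hlf.point_finite t)
  have hsum : ∀ t, ∑ᶠ i, ψ i t / σ t = 1 := fun t => by
    simp only [div_eq_mul_inv]
    rw [← finsum_mul, mul_inv_cancel₀ (hσ_pos t).ne']
  refine ⟨⟨fun i => ⟨fun t => ψ i t / σ t,
      (hψ i).div (continuous_finsum hψ hlf) fun t => (hσ_pos t).ne'⟩, ?_, ?_, ?_, ?_⟩, ?_⟩
  · exact hlf.subset fun i => by simp
  · intro i t
    exact div_nonneg (hψ_nonneg i t) (hσ_pos t).le
  · exact fun t _ => hsum t
  · exact fun t => (hsum t).le
  · exact fun i t ht h0 => ht (show ψ i t / σ t = 0 by rw [h0, zero_div])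

section LocallyFiniteShrink

variable {Ω : Type*}

/-- The `n`-th function keeps only the part of `φ n` not already dominated by the earlier ones;
for `0 ≤ φ ≤ 1` this turns a countable cozero cover into a locally finite one. -/
def locallyFiniteShrink (φ : ℕ → Ω → ℝ) (n : ℕ) (t : Ω) : ℝ :=
  max 0 (φ n t - n * ∑ k ∈ Finset.range n, φ k t)

variable {φ : ℕ → Ω → ℝ}

theorem locallyFiniteShrink_nonneg (n : ℕ) (t : Ω) : 0 ≤ locallyFiniteShrink φ n t :=
  le_max_left _ _

theorem support_locallyFiniteShrink_subset (hφ_nonneg : ∀ n t, 0 ≤ φ n t) (n : ℕ) :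
    support (locallyFiniteShrink φ n) ⊆ support (φ n) := by
  intro t ht h0
  refine ht (max_eq_left ?_)
  have : 0 ≤ (n : ℝ) * ∑ k ∈ Finset.range n, φ k t :=
    mul_nonneg n.cast_nonneg (Finset.sum_nonneg fun k _ => hφ_nonneg k t)
  linarith

theorem locallyFiniteShrink_find_ne_zero {t : Ω} [DecidablePred fun n => φ n t ≠ 0]
    (hφ_nonneg : ∀ n t, 0 ≤ φ n t) (h : ∃ n, φ n t ≠ 0) :
    locallyFiniteShrink φ (Nat.find h) t ≠ 0 := by
  have hprev : ∑ k ∈ Finset.range (Nat.find h), φ k t = 0 :=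
    Finset.sum_eq_zero fun k hk => not_not.1 (Nat.find_min h (Finset.mem_range.1 hk))
  rw [locallyFiniteShrink, hprev, mul_zero, sub_zero,
    max_eq_right (hφ_nonneg _ t)]
  exact Nat.find_spec h

variable [TopologicalSpace Ω]

theorem continuous_locallyFiniteShrink (hφ : ∀ n, Continuous (φ n)) (n : ℕ) :
    Continuous (locallyFiniteShrink φ n) :=
  continuous_const.max <|
    (hφ n).sub <| continuous_const.mul <| continuous_finsetSum _ fun k _ => hφ k

theorem locallyFinite_support_locallyFiniteShrink (hφ : ∀ n, Continuous (φ n))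
    (hφ_nonneg : ∀ n t, 0 ≤ φ n t) (hφ_le_one : ∀ n t, φ n t ≤ 1)
    (hcover : ∀ t, ∃ n, φ n t ≠ 0) :
    LocallyFinite fun n => support (locallyFiniteShrink φ n) := by
  intro t
  obtain ⟨m, hm⟩ := hcover t
  have hm_pos : 0 < φ m t := (hφ_nonneg m t).lt_of_ne' hm
  -- Near `t` we have `φ m > φ m t / 2`, hence `n * ∑ k < n, φ k ≥ 1 ≥ φ n`
  -- as soon as `n > max m (2 / φ m t)`.
  obtain ⟨N, hN⟩ := exists_nat_gt (max (m : ℝ) (2 / φ m t))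
  rw [max_lt_iff] at hN
  refine ⟨{s | φ m t / 2 < φ m s}, (isOpen_lt continuous_const (hφ m)).mem_nhds
    (half_lt_self hm_pos), (finite_lt_nat N).subset ?_⟩
  rintro n ⟨s, hs, hs_near⟩
  refine lt_of_not_ge fun (hNn : N ≤ n) => ?_
  have hmn : m < n := (Nat.cast_lt.1 hN.1).trans_le hNn
  have hsum : φ m s ≤ ∑ k ∈ Finset.range n, φ k s :=
    Finset.single_le_sum (fun k _ => hφ_nonneg k s) (Finset.mem_range.2 hmn)
  have hone : 1 ≤ (n : ℝ) * ∑ k ∈ Finset.range n, φ k s :=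
    calc (1 : ℝ) = 2 / φ m t * (φ m t / 2) := by field_simp
      _ ≤ n * (φ m t / 2) := by gcongr; exact hN.2.le.trans (Nat.cast_le.2 hNn)
      _ ≤ n * ∑ k ∈ Finset.range n, φ k s := by gcongr; exact hs_near.le.trans hsum
  exact hs (max_eq_left (by linarith [hφ_le_one n s]))

theorem exists_partitionOfUnity_support_subset (hφ : ∀ n, Continuous (φ n))
    (hcover : ∀ t, ∃ n, φ n t ≠ 0) :
    ∃ ρ : PartitionOfUnity ℕ Ω, ∀ n, support (ρ n) ⊆ support (φ n) := by
  classical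
  set φ' : ℕ → Ω → ℝ := fun n t => min 1 |φ n t|
  have hφ'_nonneg : ∀ n t, 0 ≤ φ' n t := fun n t => le_min zero_le_one (abs_nonneg _)
  have hsupport : ∀ n, support (φ' n) = support (φ n) := fun n =>
    support_comp_eq (fun x : ℝ => min 1 |x|) (by simp +contextual [min_eq_iff]) (φ n)
  have hcover' : ∀ t, ∃ n, φ' n t ≠ 0 := fun t => by
    simpa only [← mem_support, hsupport] using hcover t
  have hφ' : ∀ n, Continuous (φ' n) := fun n => continuous_const.min (hφ n).abs
  obtain ⟨ρ, hρ⟩ := exists_partitionOfUnity_of_locallyFinite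
    (continuous_locallyFiniteShrink hφ') locallyFiniteShrink_nonneg
    (locallyFinite_support_locallyFiniteShrink hφ' hφ'_nonneg (fun n t => min_le_left _ _)
      hcover')
    fun t => ⟨_, locallyFiniteShrink_find_ne_zero hφ'_nonneg (hcover' t)⟩
  exact ⟨ρ, fun n => (hρ n).trans <|
    (support_locallyFiniteShrink_subset hφ'_nonneg n).trans (hsupport n).subset⟩

end LocallyFiniteShrink

theorem exists_continuous_forall_mem_convex_of_support {Ω E : Type*} [TopologicalSpace Ω]
    [AddCommGroup E] [Module ℝ E] [TopologicalSpace E] [ContinuousAdd E] [ContinuousSMul ℝ E]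
    {T : Ω → Set E} (hT : ∀ t, Convex ℝ (T t)) {φ : ℕ → Ω → ℝ} (hφ : ∀ n, Continuous (φ n))
    (hcover : ∀ t, ∃ n, φ n t ≠ 0) {y : ℕ → E} (hy : ∀ n t, φ n t ≠ 0 → y n ∈ T t) :
    ∃ g : C(Ω, E), ∀ t, g t ∈ T t := by
  obtain ⟨ρ, hρ⟩ := exists_partitionOfUnity_support_subset hφ hcover
  exact ⟨⟨fun t => ∑ᶠ n, ρ n t • y n, ρ.continuous_finsum_smul fun n t _ => continuousAt_const⟩,
    fun t => ρ.finsum_smul_mem_convex (g := fun n _ => y n) (mem_univ t)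
      (fun n hn => hy n t (hρ n hn)) (hT t)⟩

theorem stmt_15_general {Ω X : Type*} [TopologicalSpace Ω] [AddCommGroup X]
    [Module ℝ X] [TopologicalSpace X] [IsTopologicalAddGroup X]
    [ContinuousSMul ℝ X]
    [TopologicalSpace.SeparableSpace X]
    (p : Seminorm ℝ X) (hp : Continuous p)
    (X₀ : Submodule ℝ X) (hX₀ : Dense (X₀ : Set X))
    (f : Ω → X) (hf : Continuous f) :
    ∀ ε > (0 : ℝ), ∃ g : Ω → X, Continuous g ∧ (∀ t, g t ∈ X₀) ∧
      ∀ t : Ω, p (f t - g t) < ε := by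
  intro ε hε
  have hball_open : ∀ x r, IsOpen (p.ball x r) := fun x r =>
    isOpen_lt (hp.comp (continuous_id.sub continuous_const)) continuous_const
  have hball_nonempty : ∀ x, (p.ball x (ε / 2)).Nonempty := fun x =>
    ⟨x, p.mem_ball_self (half_pos hε)⟩
  have : Nonempty X := ⟨0⟩
  set x := TopologicalSpace.denseSeq X
  choose y hyX₀ hyx using fun n => hX₀.exists_mem_open (hball_open (x n) _) (hball_nonempty (x n))
  set φ : ℕ → Ω → ℝ := fun n t => max 0 (ε / 2 - p (x n - f t))
  have hφ : ∀ n, Continuous (φ n) := fun n =>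
    continuous_const.max <| continuous_const.sub <| hp.comp <| continuous_const.sub hf
  have hφ_ne_zero : ∀ n t, φ n t ≠ 0 ↔ x n ∈ p.ball (f t) (ε / 2) := fun n t => by
    simp [φ, Seminorm.mem_ball]
  have hcover : ∀ t, ∃ n, φ n t ≠ 0 := fun t =>
    ((TopologicalSpace.denseRange_denseSeq X).exists_mem_open (hball_open (f t) _)
      (hball_nonempty (f t))).imp fun n => (hφ_ne_zero n t).2
  have hy : ∀ n t, φ n t ≠ 0 → y n ∈ (X₀ : Set X) ∩ p.ball (f t) ε := fun n t hn =>
    ⟨hyX₀ n, p.mem_ball.2 <| calc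
      p (y n - f t) ≤ p (y n - x n) + p (x n - f t) := le_map_sub_add_map_sub p _ _ _
      _ < ε / 2 + ε / 2 :=
        add_lt_add (p.mem_ball.1 (hyx n)) (p.mem_ball.1 ((hφ_ne_zero n t).1 hn))
      _ = ε := add_halves ε⟩
  obtain ⟨g, hg⟩ := exists_continuous_forall_mem_convex_of_support
    (fun t => X₀.convex.inter (p.convex_ball (f t) ε)) hφ hcover hy
  exact ⟨g, g.continuous, fun t => (hg t).1, fun t => by
    simpa only [map_sub_rev p] using p.mem_ball.1 (hg t).2⟩

theorem stmt_15 {Ω X : Type*} [TopologicalSpace Ω] [AddCommGroup X]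
    [Module ℝ X] [TopologicalSpace X] [IsTopologicalAddGroup X]
    [ContinuousSMul ℝ X] [LocallyConvexSpace ℝ X]
    [TopologicalSpace.SeparableSpace X]
    (p : Seminorm ℝ X) (hp : Continuous p)
    (X₀ : Submodule ℝ X) (hX₀ : Dense (X₀ : Set X))
    (f : Ω → X) (hf : Continuous f) :
    ∀ ε > (0 : ℝ), ∃ g : Ω → X, Continuous g ∧ (∀ t, g t ∈ X₀) ∧
      ∀ t : Ω, p (f t - g t) < ε :=
  stmt_15_general p hp X₀ hX₀ f hf
end

section
/- If C_b(I × J, ℝ) equals the uniform closure of the linear span of {(t,s) ↦ g(t)h(s) : g ∈ C_b(I, ℝ), h ∈ C_b(J, ℝ)}, where I and J are completely regular Hausdorff spaces, then β(I × J) = βI × βJ, i.e., every f ∈ C_b(I × J, ℝ) extends to a continuous function on βI × βJ. -/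
/-!
Precomposition with the dense map `I × J → βI × βJ` is an isometry from `C(βI × βJ, ℝ)` with the
sup metric into the bounded continuous functions on `I × J`. Its range is therefore complete, hence
uniformly closed. A product `u t * v s` of bounded continuous functions lies in this range (extend
`u` and `v` separately to the Stone–Čech compactifications), so the whole span does, and by
hypothesis the uniform closure of the span contains every bounded continuous `f`.
-/

open Set Bornology BoundedContinuousFunction

namespace ContinuousMap

variable {X K E : Type*} [TopologicalSpace X] [TopologicalSpace K] [CompactSpace K]

def compBounded [PseudoMetricSpace E] (e : C(X, K)) (G : C(K, E)) : X →ᵇ E :=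
  (mkOfCompact G).compContinuous e

lemma isometry_compBounded [PseudoMetricSpace E] {e : C(X, K)} (he : DenseRange e) :
    Isometry (compBounded (E := E) e) := by
  refine Isometry.of_dist_eq fun G H => le_antisymm ?_ ?_
  · exact (BoundedContinuousFunction.dist_le dist_nonneg).2 fun x => dist_apply_le_dist (e x)
  · refine (ContinuousMap.dist_le dist_nonneg).2 fun k => he.induction_on k ?_ fun x => ?_
    · exact isClosed_le (by fun_prop) continuous_const
    · exact dist_coe_le_dist (f := compBounded e G) (g := compBounded e H) x

lemma isClosed_range_compBounded [MetricSpace E] [CompleteSpace E] {e : C(X, K)}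
    (he : DenseRange e) : IsClosed (range (compBounded (E := E) e)) :=
  (isometry_compBounded he).isUniformInducing.isComplete_range.isClosed

lemma exists_comp_eq_of_forall_dist_lt [MetricSpace E] [CompleteSpace E] {e : C(X, K)}
    (he : DenseRange e) (f : X →ᵇ E)
    (happrox : ∀ ε > 0, ∃ G : C(K, E), ∀ x, dist (f x) (G (e x)) < ε) :
    ∃ F : C(K, E), ∀ x, F (e x) = f x := by
  have hf : f ∈ closure (range (compBounded e)) := by
    refine Metric.mem_closure_iff.2 fun ε hε => ?_
    obtain ⟨G, hG⟩ := happrox (ε / 2) (half_pos hε)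
    refine ⟨compBounded e G, mem_range_self G, ?_⟩
    calc dist f (compBounded e G) ≤ ε / 2 :=
          (BoundedContinuousFunction.dist_le (half_pos hε).le).2 fun x => (hG x).le
      _ < ε := half_lt_self hε
  rw [(isClosed_range_compBounded he).closure_eq] at hf
  obtain ⟨F, rfl⟩ := hf
  exact ⟨F, fun x => rfl⟩

end ContinuousMap

lemma exists_continuousMap_comp_stoneCechUnit_eq {X E : Type*} [TopologicalSpace X]
    [MetricSpace E] [ProperSpace E]
    {u : X → E} (hu : Continuous u) (hb : IsBounded (range u)) :
    ∃ U : C(StoneCech X, E), ∀ x, U (stoneCechUnit x) = u x := by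
  have : CompactSpace (closure (range u)) := isCompact_iff_compactSpace.1 hb.isCompact_closure
  have hu' : Continuous (codRestrict u _ fun x => subset_closure (mem_range_self x)) :=
    hu.codRestrict _
  exact ⟨⟨_, continuous_subtype_val.comp (continuous_stoneCechExtend hu')⟩,
    fun x => congrArg Subtype.val (stoneCechExtend_stoneCechUnit hu' x)⟩

def stoneCechUnitProd (I J : Type*) [TopologicalSpace I] [TopologicalSpace J] :
    C(I × J, StoneCech I × StoneCech J) :=
  ⟨Prod.map stoneCechUnit stoneCechUnit,
    continuous_stoneCechUnit.prodMap continuous_stoneCechUnit⟩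

@[simp]
lemma stoneCechUnitProd_apply {I J : Type*} [TopologicalSpace I] [TopologicalSpace J]
    (q : I × J) :
    stoneCechUnitProd I J q = (stoneCechUnit q.1, stoneCechUnit q.2) :=
  rfl

def boundedProducts (I J : Type*) [TopologicalSpace I] [TopologicalSpace J] : Set (I × J → ℝ) :=
  {h | ∃ (u : I → ℝ) (v : J → ℝ), Continuous u ∧ IsBounded (range u) ∧
    Continuous v ∧ IsBounded (range v) ∧ h = fun q => u q.1 * v q.2}

lemma exists_comp_stoneCechUnitProd_eq_of_mem_span {I J : Type*} [TopologicalSpace I]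
    [TopologicalSpace J] {g : I × J → ℝ} (hg : g ∈ Submodule.span ℝ (boundedProducts I J)) :
    ∃ G : C(StoneCech I × StoneCech J, ℝ), ∀ q, G (stoneCechUnitProd I J q) = g q := by
  let restrict := (ContinuousMap.coeFnLinearMap ℝ).comp
    (ContinuousMap.compRightAlgHom ℝ ℝ (stoneCechUnitProd I J)).toLinearMap
  have hspan : Submodule.span ℝ (boundedProducts I J) ≤ LinearMap.range restrict := by
    refine Submodule.span_le.2 ?_
    rintro _ ⟨u, v, hu, hbu, hv, hbv, rfl⟩
    obtain ⟨U, hU⟩ := exists_continuousMap_comp_stoneCechUnit_eq hu hbu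
    obtain ⟨V, hV⟩ := exists_continuousMap_comp_stoneCechUnit_eq hv hbv
    refine ⟨U.comp .fst * V.comp .snd, funext fun q => ?_⟩
    simp [restrict, hU, hV]
  obtain ⟨G, rfl⟩ := hspan hg
  exact ⟨G, fun q => rfl⟩

theorem stmt_16_general {I J : Type*} [TopologicalSpace I] [TopologicalSpace J]
    (hdense : ∀ f : I × J → ℝ, Continuous f →
      Bornology.IsBounded (Set.range f) → ∀ ε > (0 : ℝ),
        ∃ g ∈ Submodule.span ℝ {h : I × J → ℝ | ∃ (u : I → ℝ) (v : J → ℝ),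
          Continuous u ∧ Bornology.IsBounded (Set.range u) ∧
          Continuous v ∧ Bornology.IsBounded (Set.range v) ∧
            h = fun q => u q.1 * v q.2},
          ∀ q : I × J, |f q - g q| < ε) :
    ∀ f : I × J → ℝ, Continuous f → Bornology.IsBounded (Set.range f) →
      ∃ F : StoneCech I × StoneCech J → ℝ, Continuous F ∧
        ∀ q : I × J, F (stoneCechUnit q.1, stoneCechUnit q.2) = f q := by
  intro f hf hbf
  obtain ⟨C, hC⟩ := Metric.isBounded_range_iff.1 hbf
  have happrox : ∀ ε > 0, ∃ G : C(StoneCech I × StoneCech J, ℝ),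
      ∀ q, dist (f q) (G (stoneCechUnitProd I J q)) < ε := by
    intro ε hε
    obtain ⟨g, hg, hfg⟩ := hdense f hf hbf ε hε
    obtain ⟨G, hG⟩ := exists_comp_stoneCechUnitProd_eq_of_mem_span hg
    exact ⟨G, fun q => by rw [Real.dist_eq, hG]; exact hfg q⟩
  obtain ⟨F, hF⟩ := ContinuousMap.exists_comp_eq_of_forall_dist_lt
    (denseRange_stoneCechUnit.prodMap denseRange_stoneCechUnit) (mkOfBound ⟨f, hf⟩ C hC) happrox
  exact ⟨F, F.continuous, hF⟩

theorem stmt_16 {I J : Type*} [TopologicalSpace I] [CompletelyRegularSpace I]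
    [T2Space I] [TopologicalSpace J] [CompletelyRegularSpace J] [T2Space J]
    (hdense : ∀ f : I × J → ℝ, Continuous f →
      Bornology.IsBounded (Set.range f) → ∀ ε > (0 : ℝ),
        ∃ g ∈ Submodule.span ℝ {h : I × J → ℝ | ∃ (u : I → ℝ) (v : J → ℝ),
          Continuous u ∧ Bornology.IsBounded (Set.range u) ∧
          Continuous v ∧ Bornology.IsBounded (Set.range v) ∧
            h = fun q => u q.1 * v q.2},
          ∀ q : I × J, |f q - g q| < ε) :
    ∀ f : I × J → ℝ, Continuous f → Bornology.IsBounded (Set.range f) →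
      ∃ F : StoneCech I × StoneCech J → ℝ, Continuous F ∧
        ∀ q : I × J, F (stoneCechUnit q.1, stoneCechUnit q.2) = f q :=
  stmt_16_general hdense
end
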